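/- arXiv:2410.08957 — 2 statements merged into one kernel-verified Lean document; each statement's English description precedes it below -/
import Mathlib

section
/- Every finite forest satisfies the bunkbed conjecture: if T is a finite simple acyclic graph, μ is a symmetric weight on BB(T), and x, y are vertices of T, then P_{BB(T),μ}(x⁻ ∼ y⁻) ≥ P_{BB(T),μ}(x⁻ ∼ y⁺). -/
open Classical

noncomputable def edgeFin {V : Type*} [Fintype V] (G : SimpleGraph V) : Finset (Sym2 V) :=
  G.edgeSet.toFinset

noncomputable def percWeight {V : Type*} [Fintype V] (G : SimpleGraph V)
    (μ : Sym2 V → ℝ) (K : Finset (Sym2 V)) : ℝ :=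
  (∏ e ∈ K, μ e) * ∏ e ∈ edgeFin G \ K, (1 - μ e)

noncomputable def percProb {V : Type*} [Fintype V] (G : SimpleGraph V)
    (μ : Sym2 V → ℝ) (A : Finset (Sym2 V) → Prop) : ℝ :=
  ∑ K ∈ (edgeFin G).powerset, if A K then percWeight G μ K else 0

def ConnIn {V : Type*} (K : Finset (Sym2 V)) (x y : V) : Prop :=
  (SimpleGraph.fromEdgeSet (↑K : Set (Sym2 V))).Reachable x y

def IsWeight {V : Type*} (G : SimpleGraph V) (μ : Sym2 V → ℝ) : Prop :=
  ∀ e ∈ G.edgeSet, 0 ≤ μ e ∧ μ e ≤ 1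

def BB {V : Type*} (G : SimpleGraph V) : SimpleGraph (V × Bool) :=
  G.boxProd ⊤

def IsSymWeight {V : Type*} (G : SimpleGraph V) (μ : Sym2 (V × Bool) → ℝ) : Prop :=
  ∀ x y : V, G.Adj x y →
    μ s((x, false), (y, false)) = μ s((x, true), (y, true))

def SatisfiesBunkbed {V : Type*} [Fintype V] (G : SimpleGraph V) : Prop :=
  ∀ μ : Sym2 (V × Bool) → ℝ, IsWeight (BB G) μ → IsSymWeight G μ →
    ∀ x y : V,
      percProb (BB G) μ (fun K => ConnIn K (x, false) (y, true)) ≤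
        percProb (BB G) μ (fun K => ConnIn K (x, false) (y, false))

def restrict {V : Type*} (G : SimpleGraph V) (S : Set V) : SimpleGraph V where
  Adj x y := G.Adj x y ∧ x ∈ S ∧ y ∈ S
  symm := ⟨fun x y h => ⟨h.1.symm, h.2.2, h.2.1⟩⟩
  loopless := ⟨fun x h => G.loopless.irrefl x h.1⟩

def IsCutVertex {V : Type*} (G : SimpleGraph V) (v : V) : Prop :=
  ∃ x y : ({u | u ≠ v} : Set V),
    G.Reachable x.1 y.1 ∧ ¬ (G.induce {u | u ≠ v}).Reachable x y

namespace BunkbedAux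

variable {V : Type*}

/-- level-swap on vertices of the bunkbed -/
def mirrorV (z : V × Bool) : V × Bool := (z.1, !z.2)

def mirrorE (E : Sym2 (V × Bool)) : Sym2 (V × Bool) := E.map mirrorV

def projE (E : Sym2 (V × Bool)) : Sym2 V := E.map Prod.fst

lemma mirrorV_invol : Function.Involutive (mirrorV (V := V)) := by
  intro z; simp [mirrorV]

lemma mirrorE_invol : Function.Involutive (mirrorE (V := V)) := by
  intro E; unfold mirrorE; rw [Sym2.map_map]
  have : (mirrorV ∘ mirrorV : V × Bool → V × Bool) = id := funext mirrorV_invol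
  rw [this, Sym2.map_id]; rfl

lemma projE_mirrorE (E : Sym2 (V × Bool)) : projE (mirrorE E) = projE E := by
  unfold projE mirrorE; rw [Sym2.map_map]; rfl

/-- flip the edges whose projection lies in `S` -/
noncomputable def flipE (S : Finset (Sym2 V)) (E : Sym2 (V × Bool)) : Sym2 (V × Bool) :=
  if projE E ∈ S then mirrorE E else E

lemma flipE_invol (S : Finset (Sym2 V)) : Function.Involutive (flipE (V := V) S) := by
  intro E; unfold flipE
  by_cases h : projE E ∈ S
  · rw [if_pos h, if_pos (by rwa [projE_mirrorE]), mirrorE_invol]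
  · rw [if_neg h, if_neg h]

lemma BB_adj {T : SimpleGraph V} {a b : V × Bool} :
    (BB T).Adj a b ↔ (T.Adj a.1 b.1 ∧ a.2 = b.2) ∨ ((a.2 ≠ b.2) ∧ a.1 = b.1) := by
  unfold BB
  rw [SimpleGraph.boxProd_adj]
  simp

lemma mirrorE_mem_edgeSet {T : SimpleGraph V} {E : Sym2 (V × Bool)}
    (h : E ∈ (BB T).edgeSet) : mirrorE E ∈ (BB T).edgeSet := by
  induction E with
  | _ a b =>
    simp only [SimpleGraph.mem_edgeSet] at h
    have h' := BB_adj.1 h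
    simp only [mirrorE, Sym2.map_pair_eq, SimpleGraph.mem_edgeSet]
    rw [BB_adj]
    rcases h' with ⟨hadj, heq⟩ | ⟨hadj, heq⟩
    · exact Or.inl ⟨hadj, by simp [mirrorV, heq]⟩
    · exact Or.inr ⟨by simp [mirrorV]; exact fun hc => hadj (by simpa using hc), by simp [mirrorV, heq]⟩

lemma flipE_mem_edgeSet {T : SimpleGraph V} (S : Finset (Sym2 V)) {E : Sym2 (V × Bool)}
    (h : E ∈ (BB T).edgeSet) : flipE S E ∈ (BB T).edgeSet := by
  unfold flipE; split
  · exact mirrorE_mem_edgeSet h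
  · exact h

/-- vertical edges are fixed by mirror -/
lemma mirrorE_vertical (u : V) (c d : Bool) (h : c ≠ d) :
    mirrorE s((u,c),(u,d)) = s((u,c),(u,d)) := by
  have hd : d = !c := by cases c <;> cases d <;> simp_all
  subst hd
  simp [mirrorE, Sym2.map_pair_eq, mirrorV, Sym2.eq_swap]

lemma mu_flipE {T : SimpleGraph V} {μ : Sym2 (V × Bool) → ℝ} (hsym : IsSymWeight T μ)
    (S : Finset (Sym2 V)) {E : Sym2 (V × Bool)} (h : E ∈ (BB T).edgeSet) :
    μ (flipE S E) = μ E := by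
  unfold flipE; split
  · induction E with
    | _ a b =>
      simp only [SimpleGraph.mem_edgeSet] at h
      rcases BB_adj.1 h with ⟨hadj, heq⟩ | ⟨hadj, heq⟩
      · obtain ⟨ua, ca⟩ := a; obtain ⟨ub, cb⟩ := b
        simp only at hadj heq
        subst heq
        cases ca
        · simpa [mirrorE, Sym2.map_pair_eq, mirrorV] using (hsym ua ub hadj).symm
        · simpa [mirrorE, Sym2.map_pair_eq, mirrorV] using hsym ua ub hadj
      · obtain ⟨ua, ca⟩ := a; obtain ⟨ub, cb⟩ := b
        simp only at hadj heq
        subst heq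
        rw [mirrorE_vertical ua ca cb (by simpa using hadj)]
  · rfl

noncomputable def flipF (S : Finset (Sym2 V)) (K : Finset (Sym2 (V × Bool))) :
    Finset (Sym2 (V × Bool)) := K.image (flipE S)

lemma mem_flipF {S : Finset (Sym2 V)} {K : Finset (Sym2 (V × Bool))} {E : Sym2 (V × Bool)} :
    E ∈ flipF S K ↔ flipE S E ∈ K := by
  unfold flipF
  constructor
  · rintro h
    obtain ⟨E', hE', hEq⟩ := Finset.mem_image.1 h
    rwa [← hEq, flipE_invol]
  · intro h
    exact Finset.mem_image.2 ⟨flipE S E, h, flipE_invol S E⟩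

lemma flipF_flipF (S : Finset (Sym2 V)) (K : Finset (Sym2 (V × Bool))) :
    flipF S (flipF S K) = K := by
  ext E; rw [mem_flipF, mem_flipF, flipE_invol]

section Weights

variable {V : Type*} [Fintype V] {T : SimpleGraph V} {μ : Sym2 (V × Bool) → ℝ}

lemma flipF_subset_edgeFin (S : Finset (Sym2 V)) {K : Finset (Sym2 (V × Bool))}
    (hK : K ⊆ edgeFin (BB T)) : flipF S K ⊆ edgeFin (BB T) := by
  intro E hE
  rw [mem_flipF] at hE
  have := hK hE
  rw [edgeFin, Set.mem_toFinset] at this ⊢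
  have h2 := flipE_mem_edgeSet (T := T) S this
  rwa [flipE_invol] at h2

lemma sdiff_flipF (S : Finset (Sym2 V)) {K : Finset (Sym2 (V × Bool))}
    (hK : K ⊆ edgeFin (BB T)) :
    edgeFin (BB T) \ flipF S K = flipF S (edgeFin (BB T) \ K) := by
  ext E
  rw [Finset.mem_sdiff, mem_flipF, mem_flipF, Finset.mem_sdiff]
  constructor
  · rintro ⟨hE, hnK⟩
    refine ⟨?_, hnK⟩
    rw [edgeFin, Set.mem_toFinset] at hE ⊢
    exact flipE_mem_edgeSet S hE
  · rintro ⟨hE, hnK⟩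
    refine ⟨?_, hnK⟩
    rw [edgeFin, Set.mem_toFinset] at hE ⊢
    have := flipE_mem_edgeSet (T := T) S hE
    rwa [flipE_invol] at this

lemma percWeight_flipF (hsym : IsSymWeight T μ) (S : Finset (Sym2 V))
    {K : Finset (Sym2 (V × Bool))} (hK : K ⊆ edgeFin (BB T)) :
    percWeight (BB T) μ (flipF S K) = percWeight (BB T) μ K := by
  unfold percWeight
  congr 1
  · unfold flipF
    rw [Finset.prod_image (fun a ha b hb h => (flipE_invol S).injective h)]
    exact Finset.prod_congr rfl (fun e he => mu_flipE hsym S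
      (Set.mem_toFinset.1 (hK he)))
  · refine Finset.prod_nbij' (fun E => flipE S E) (fun E => flipE S E) ?_ ?_ ?_ ?_ ?_
    · intro E hE
      simp only [Finset.mem_sdiff] at hE ⊢
      refine ⟨?_, ?_⟩
      · exact Set.mem_toFinset.2 (flipE_mem_edgeSet S (Set.mem_toFinset.1 hE.1))
      · intro hc
        exact hE.2 (mem_flipF.2 hc)
    · intro E hE
      simp only [Finset.mem_sdiff] at hE ⊢
      refine ⟨?_, ?_⟩
      · exact Set.mem_toFinset.2 (flipE_mem_edgeSet S (Set.mem_toFinset.1 hE.1))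
      · intro hc
        have hc2 := mem_flipF.1 hc
        rw [flipE_invol S E] at hc2
        exact hE.2 hc2
    · intro E _; exact flipE_invol S E
    · intro E _; exact flipE_invol S E
    · intro E hE
      simp only [Finset.mem_sdiff] at hE
      rw [mu_flipE hsym S (Set.mem_toFinset.1 hE.1)]

lemma percProb_flip (hsym : IsSymWeight T μ) (S : Finset (Sym2 V))
    (A : Finset (Sym2 (V × Bool)) → Prop) :
    percProb (BB T) μ A =
      ∑ K ∈ (edgeFin (BB T)).powerset, if A (flipF S K) then percWeight (BB T) μ K else 0 := by
  unfold percProb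
  refine (Finset.sum_nbij' (fun K => flipF S K) (fun K => flipF S K) ?_ ?_ ?_ ?_ ?_).symm
  · intro K hK
    rw [Finset.mem_powerset] at hK ⊢
    exact flipF_subset_edgeFin S hK
  · intro K hK
    rw [Finset.mem_powerset] at hK ⊢
    exact flipF_subset_edgeFin S hK
  · intro K _; exact flipF_flipF S K
  · intro K _; exact flipF_flipF S K
  · intro K hK
    rw [Finset.mem_powerset] at hK
    simp only [flipF_flipF S K, percWeight_flipF hsym S hK]

lemma percWeight_nonneg (hμ : IsWeight (BB T) μ) {K : Finset (Sym2 (V × Bool))}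
    (hK : K ⊆ edgeFin (BB T)) : 0 ≤ percWeight (BB T) μ K := by
  unfold percWeight
  apply mul_nonneg
  · exact Finset.prod_nonneg (fun e he => (hμ e
      (by have := hK he; rwa [edgeFin, Set.mem_toFinset] at this)).1)
  · refine Finset.prod_nonneg (fun e he => ?_)
    simp only [Finset.mem_sdiff] at he
    have := (hμ e (by have := he.1; rwa [edgeFin, Set.mem_toFinset] at this)).2
    linarith

/-- The master reduction: to compare percolation probabilities of two events it
suffices to compare, for every configuration, the number of flips putting it in
each event. -/
lemma percProb_le_of_counts (hμ : IsWeight (BB T) μ) (hsym : IsSymWeight T μ)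
    (A B : Finset (Sym2 (V × Bool)) → Prop)
    (hcount : ∀ K ∈ (edgeFin (BB T)).powerset,
      (∑ S ∈ (edgeFin T).powerset, if A (flipF S K) then (1:ℝ) else 0) ≤
      (∑ S ∈ (edgeFin T).powerset, if B (flipF S K) then (1:ℝ) else 0)) :
    percProb (BB T) μ A ≤ percProb (BB T) μ B := by
  have key : ∀ (C : Finset (Sym2 (V × Bool)) → Prop),
      ((edgeFin T).powerset.card : ℝ) * percProb (BB T) μ C =
      ∑ K ∈ (edgeFin (BB T)).powerset,
        (∑ S ∈ (edgeFin T).powerset, if C (flipF S K) then (1:ℝ) else 0) *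
          percWeight (BB T) μ K := by
    intro C
    have h1 : ((edgeFin T).powerset.card : ℝ) * percProb (BB T) μ C =
        ∑ S ∈ (edgeFin T).powerset, percProb (BB T) μ C := by
      rw [Finset.sum_const, nsmul_eq_mul]
    rw [h1]
    have h2 : ∀ S ∈ (edgeFin T).powerset, percProb (BB T) μ C =
        ∑ K ∈ (edgeFin (BB T)).powerset,
          if C (flipF S K) then percWeight (BB T) μ K else 0 :=
      fun S _ => percProb_flip hsym S C
    rw [Finset.sum_congr rfl h2, Finset.sum_comm]
    refine Finset.sum_congr rfl (fun K hK => ?_)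
    rw [Finset.sum_mul]
    refine Finset.sum_congr rfl (fun S hS => ?_)
    split <;> simp
  have hcmp : ((edgeFin T).powerset.card : ℝ) * percProb (BB T) μ A ≤
      ((edgeFin T).powerset.card : ℝ) * percProb (BB T) μ B := by
    rw [key A, key B]
    refine Finset.sum_le_sum (fun K hK => ?_)
    have hw := percWeight_nonneg hμ (Finset.mem_powerset.1 hK)
    exact mul_le_mul_of_nonneg_right (hcount K hK) hw
  have hpos : (0:ℝ) < ((edgeFin T).powerset.card : ℝ) := by
    have : 0 < (edgeFin T).powerset.card := Finset.card_pos.2 ⟨∅, Finset.empty_mem_powerset _⟩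
    exact_mod_cast this
  exact le_of_mul_le_mul_left hcmp hpos

end Weights

section Graphs

variable {V : Type*}

lemma walk_closed {W : Type*} {G : SimpleGraph W} {D : Set W}
    (hD : ∀ z ∈ D, ∀ z', G.Adj z z' → z' ∈ D) :
    ∀ {s t : W}, G.Walk s t → s ∈ D → t ∈ D := by
  intro s t w
  induction w with
  | nil => exact id
  | cons h p ih => exact fun hs => ih (hD _ hs _ h)

lemma reach_closed {W : Type*} {G : SimpleGraph W} {D : Set W}
    (hD : ∀ z ∈ D, ∀ z', G.Adj z z' → z' ∈ D) {s t : W}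
    (h : G.Reachable s t) (hs : s ∈ D) : t ∈ D := by
  obtain ⟨w⟩ := h
  exact walk_closed hD w hs

/-- edges of the bunkbed lying over a set of base vertices -/
def OvS (Rs : Set V) : Set (Sym2 (V × Bool)) := {E | ∀ w ∈ E, w.1 ∈ Rs}

lemma OvS_mono {Rs Rs' : Set V} (h : Rs ⊆ Rs') : OvS Rs ⊆ OvS Rs' :=
  fun _ hE w hw => h (hE w hw)

lemma levels_any {N : SimpleGraph (V × Bool)} {u : V}
    (h : N.Reachable (u, false) (u, true)) (c : Bool) : N.Reachable (u, c) (u, !c) := by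
  cases c
  · exact h
  · exact h.symm

lemma reach_levels {N : SimpleGraph (V × Bool)} {u : V} {a b : Bool}
    (h : N.Reachable (u, a) (u, b)) (hne : a ≠ b) : N.Reachable (u, false) (u, true) := by
  cases a <;> cases b <;> simp_all
  exact h.symm

variable {T : SimpleGraph V} {Rs : Set V} {Suf : Finset (Sym2 V)}
  {M M' : Set (Sym2 (V × Bool))}

/-- edges with both feet over `Rs` get mirrored -/
lemma edge_transfer (hMBB : M ⊆ (BB T).edgeSet)
    (hM' : ∀ E, E ∈ M' ↔ flipE Suf E ∈ M)
    (hSufT : ∀ ed ∈ Suf, ed ∈ T.edgeSet)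
    (hSufR : ∀ ed ∈ T.edgeSet, (∀ w ∈ ed, w ∈ Rs) → ed ∈ Suf)
    {z z' : V × Bool} (hz : z.1 ∈ Rs) (hz' : z'.1 ∈ Rs)
    (hE : s(z, z') ∈ M) : s(mirrorV z, mirrorV z') ∈ M' := by
  have hBB := hMBB hE
  rw [SimpleGraph.mem_edgeSet] at hBB
  rw [hM']
  rcases BB_adj.1 hBB with ⟨hadj, _⟩ | ⟨hne, heq⟩
  · -- horizontal edge
    have hproj : projE s(mirrorV z, mirrorV z') ∈ Suf := by
      apply hSufR
      · show s((mirrorV z).1, (mirrorV z').1) ∈ T.edgeSet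
        simpa [mirrorV] using hadj
      · intro w hw
        rw [show projE s(mirrorV z, mirrorV z') = s(z.1, z'.1) by simp [projE, mirrorV]] at hw
        rcases Sym2.mem_iff.1 hw with h | h <;> subst h <;> assumption
    rw [flipE, if_pos hproj]
    rw [show mirrorE s(mirrorV z, mirrorV z') = s(z, z') by
      simp [mirrorE, Sym2.map_pair_eq, mirrorV_invol z, mirrorV_invol z']]
    exact hE
  · -- vertical edge
    obtain ⟨u, c⟩ := z
    obtain ⟨u', c'⟩ := z'
    simp only at hne heq
    subst heq
    have hmv : s(mirrorV (u, c), mirrorV (u, c')) = s((u,c),(u,c')) := by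
      have := mirrorE_vertical u c c' hne
      simpa [mirrorE, Sym2.map_pair_eq] using this
    rw [hmv, flipE, if_neg, ]
    · exact hE
    · intro hmem
      have := hSufT _ hmem
      rw [show projE s((u,c),(u,c')) = s(u,u) by simp [projE]] at this
      exact T.loopless.irrefl u (T.mem_edgeSet.1 this)

/-- edges with a foot outside `Rs` are unchanged -/
lemma edge_keep (hM' : ∀ E, E ∈ M' ↔ flipE Suf E ∈ M)
    (hSufOver : ∀ ed ∈ Suf, ∀ w ∈ ed, w ∈ Rs)
    {z z' : V × Bool} (hz : z.1 ∉ Rs) :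
    (s(z, z') ∈ M' ↔ s(z, z') ∈ M) := by
  rw [hM', flipE, if_neg]
  intro hmem
  apply hz
  apply hSufOver _ hmem
  rw [show projE s(z, z') = s(z.1, z'.1) by simp [projE]]
  exact Sym2.mem_mk_left _ _

lemma mirror_transfer (hMBB : M ⊆ (BB T).edgeSet)
    (hM' : ∀ E, E ∈ M' ↔ flipE Suf E ∈ M)
    (hSufT : ∀ ed ∈ Suf, ed ∈ T.edgeSet)
    (hSufR : ∀ ed ∈ T.edgeSet, (∀ w ∈ ed, w ∈ Rs) → ed ∈ Suf)
    {z t : V × Bool}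
    (h : (SimpleGraph.fromEdgeSet (M ∩ OvS Rs)).Reachable z t) :
    (SimpleGraph.fromEdgeSet (M' ∩ OvS Rs)).Reachable (mirrorV z) (mirrorV t) := by
  have := reach_closed (D := {w | (SimpleGraph.fromEdgeSet (M' ∩ OvS Rs)).Reachable
      (mirrorV z) (mirrorV w)}) ?_ h (by exact SimpleGraph.Reachable.refl _)
  · exact this
  · intro w hw w' hadj
    rw [SimpleGraph.fromEdgeSet_adj] at hadj
    obtain ⟨⟨hEM, hEO⟩, hne⟩ := hadj
    have hw1 : w.1 ∈ Rs := hEO w (Sym2.mem_mk_left _ _)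
    have hw'1 : w'.1 ∈ Rs := hEO w' (Sym2.mem_mk_right _ _)
    have hE' : s(mirrorV w, mirrorV w') ∈ M' :=
      edge_transfer hMBB hM' hSufT hSufR hw1 hw'1 hEM
    refine hw.trans (SimpleGraph.Adj.reachable ?_)
    rw [SimpleGraph.fromEdgeSet_adj]
    refine ⟨⟨hE', ?_⟩, ?_⟩
    · intro u hu
      rcases Sym2.mem_iff.1 hu with h | h <;> subst h <;> simp [mirrorV]
      exacts [hw1, hw'1]
    · intro hc
      exact hne (mirrorV_invol.injective hc)

/-- The surgery lemma: mirroring a configuration beyond a cut with a virtual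
vertical at the cut vertex turns a connection to the top into one to the bottom. -/
lemma surgery (hMBB : M ⊆ (BB T).edgeSet)
    (hM' : ∀ E, E ∈ M' ↔ flipE Suf E ∈ M)
    (hSufT : ∀ ed ∈ Suf, ed ∈ T.edgeSet)
    (hSufR : ∀ ed ∈ T.edgeSet, (∀ w ∈ ed, w ∈ Rs) → ed ∈ Suf)
    (hSufOver : ∀ ed ∈ Suf, ∀ w ∈ ed, w ∈ Rs)
    {x0 y0 bb : V}
    (hcross : ∀ u w, T.Adj u w → u ∉ Rs → w ∈ Rs → w = bb)
    (hbridge : (SimpleGraph.fromEdgeSet (M' ∩ OvS Rs)).Reachable (bb, false) (bb, true))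
    (hxRs : x0 ∈ Rs → x0 = bb) (hyRs : y0 ∈ Rs)
    (hconn : (SimpleGraph.fromEdgeSet M).Reachable (x0, false) (y0, true)) :
    (SimpleGraph.fromEdgeSet M').Reachable (x0, false) (y0, false) := by
  classical
  set N' := SimpleGraph.fromEdgeSet M' with hN'
  have hbr : ∀ c : Bool, N'.Reachable (bb, c) (bb, !c) := by
    intro c
    refine levels_any (h := ?_) c
    exact hbridge.mono (SimpleGraph.fromEdgeSet_mono Set.inter_subset_left)
  set D : Set (V × Bool) := {z | (z.1 ∉ Rs ∧ N'.Reachable (x0, false) z) ∨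
    (z.1 ∈ Rs ∧ N'.Reachable (x0, false) (mirrorV z))} with hD
  have hstart : ((x0, false) : V × Bool) ∈ D := by
    by_cases hx : x0 ∈ Rs
    · right
      refine ⟨hx, ?_⟩
      rw [hxRs hx]
      exact hbr false
    · left
      exact ⟨hx, SimpleGraph.Reachable.refl _⟩
  have hadjM' : ∀ (u w : V × Bool), s(u, w) ∈ M' → u ≠ w → N'.Adj u w := by
    intro u w hE hne
    rw [hN', SimpleGraph.fromEdgeSet_adj]
    exact ⟨hE, hne⟩
  have hclosed : ∀ z ∈ D, ∀ z', (SimpleGraph.fromEdgeSet M).Adj z z' → z' ∈ D := by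
    intro z hz z' hadj
    rw [SimpleGraph.fromEdgeSet_adj] at hadj
    obtain ⟨hEM, hne⟩ := hadj
    have hBB := hMBB hEM
    rw [SimpleGraph.mem_edgeSet] at hBB
    by_cases hz1 : z.1 ∈ Rs <;> by_cases hz'1 : z'.1 ∈ Rs
    · -- both inside : use mirrored edge
      rcases hz with ⟨hc, _⟩ | ⟨_, hr⟩
      · exact absurd hz1 hc
      right
      refine ⟨hz'1, hr.trans (SimpleGraph.Adj.reachable (hadjM' _ _ ?_ ?_))⟩
      · exact edge_transfer hMBB hM' hSufT hSufR hz1 hz'1 hEM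
      · exact fun hc => hne (mirrorV_invol.injective hc)
    · -- crossing from inside to outside
      rcases hz with ⟨hc, _⟩ | ⟨_, hr⟩
      · exact absurd hz1 hc
      -- the edge is horizontal, and z.1 = bb
      rcases BB_adj.1 hBB with ⟨hadjT, hlev⟩ | ⟨_, heq⟩
      · have hzbb : z.1 = bb := hcross z'.1 z.1 hadjT.symm hz'1 hz1
        have hEM2 : s(z', z) ∈ M := by rwa [Sym2.eq_swap] at hEM
        have hEM'2 : s(z', z) ∈ M' := (edge_keep hM' hSufOver (z := z') (z' := z) hz'1).2 hEM2
        have hEM' : s(z, z') ∈ M' := by rwa [Sym2.eq_swap]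
        left
        refine ⟨hz'1, ?_⟩
        have h1 : N'.Reachable (x0, false) (mirrorV z) := hr
        have h2 : N'.Reachable (mirrorV z) z := by
          have : z = (bb, z.2) := by rw [← hzbb]
          rw [this]
          show N'.Reachable (bb, !z.2) (bb, z.2)
          simpa using (hbr (!z.2))
        exact (h1.trans h2).trans (SimpleGraph.Adj.reachable (hadjM' _ _ hEM' hne))
      · exact absurd (heq ▸ hz1) (by rw [← heq] at hz'1 ⊢; exact fun _ => hz'1 (heq ▸ hz1))
    · -- crossing from outside to inside
      rcases hz with ⟨hc, hr⟩ | ⟨hcr, _⟩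
      swap
      · exact absurd hcr hz1
      rcases BB_adj.1 hBB with ⟨hadjT, hlev⟩ | ⟨_, heq⟩
      · have hz'bb : z'.1 = bb := hcross z.1 z'.1 hadjT hz1 hz'1
        have hEM' : s(z, z') ∈ M' := (edge_keep hM' hSufOver (z := z) (z' := z') hz1).2 hEM
        right
        refine ⟨hz'1, ?_⟩
        have h1 : N'.Reachable (x0, false) z' :=
          hr.trans (SimpleGraph.Adj.reachable (hadjM' _ _ hEM' hne))
        have h2 : N'.Reachable z' (mirrorV z') := by
          have : z' = (bb, z'.2) := by rw [← hz'bb]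
          rw [this]
          exact hbr z'.2
        exact h1.trans h2
      · exact absurd (heq ▸ hz'1) (fun _ => hz1 (heq ▸ hz'1))
    · -- both outside : edge kept
      rcases hz with ⟨_, hr⟩ | ⟨hcr, _⟩
      swap
      · exact absurd hcr hz1
      left
      refine ⟨hz'1, hr.trans (SimpleGraph.Adj.reachable (hadjM' _ _ ?_ hne))⟩
      exact (edge_keep hM' hSufOver (z := z) (z' := z') hz1).2 hEM
  have hy := reach_closed hclosed hconn hstart
  rcases hy with ⟨hc, _⟩ | ⟨_, hr⟩
  · exact absurd hyRs hc
  · exact hr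

end Graphs

section PathMachinery

open SimpleGraph

variable {V : Type*} {T : SimpleGraph V} {x y : V}

def tlW (T : SimpleGraph V) (y : V) : (Σ u, T.Walk u y) → Σ u, T.Walk u y
  | ⟨_, SimpleGraph.Walk.nil⟩ => ⟨y, SimpleGraph.Walk.nil⟩
  | ⟨_, SimpleGraph.Walk.cons h q⟩ => ⟨_, q⟩

def sfx (p : T.Walk x y) (j : ℕ) : Σ u, T.Walk u y := (tlW T y)^[j] ⟨x, p⟩

lemma sfx_zero (p : T.Walk x y) : sfx p 0 = ⟨x, p⟩ := rfl

lemma sfx_succ (p : T.Walk x y) (j : ℕ) : sfx p (j+1) = tlW T y (sfx p j) :=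
  Function.iterate_succ_apply' _ _ _

lemma tlW_length (σ : Σ u, T.Walk u y) : (tlW T y σ).2.length = σ.2.length - 1 := by
  rcases σ with ⟨u, q⟩
  cases q with
  | nil => simp [tlW]
  | cons h q' => simp [tlW]

lemma tlW_edges (σ : Σ u, T.Walk u y) : (tlW T y σ).2.edges = σ.2.edges.tail := by
  rcases σ with ⟨u, q⟩
  cases q with
  | nil => simp [tlW]
  | cons h q' => simp [tlW]

lemma tlW_path (σ : Σ u, T.Walk u y) (h : σ.2.IsPath) : (tlW T y σ).2.IsPath := by
  rcases σ with ⟨u, q⟩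
  cases q with
  | nil => simp [tlW]
  | cons h' q' => exact (SimpleGraph.Walk.cons_isPath_iff _ _ |>.1 h).1

lemma tlW_cons (σ : Σ u, T.Walk u y) (h : 0 < σ.2.length) :
    ∃ hadj : T.Adj σ.1 (tlW T y σ).1, σ.2 = SimpleGraph.Walk.cons hadj (tlW T y σ).2 := by
  rcases σ with ⟨u, q⟩
  cases q with
  | nil => simp at h
  | cons h' q' => exact ⟨h', rfl⟩

lemma sfx_length (p : T.Walk x y) (j : ℕ) : (sfx p j).2.length = p.length - j := by
  induction j with
  | zero => rfl
  | succ m ih => rw [sfx_succ, tlW_length, ih]; omega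

lemma sfx_edges (p : T.Walk x y) (j : ℕ) : (sfx p j).2.edges = p.edges.drop j := by
  induction j with
  | zero => rfl
  | succ m ih => rw [sfx_succ, tlW_edges, ih, List.tail_drop]

lemma sfx_path {p : T.Walk x y} (hp : p.IsPath) (j : ℕ) : (sfx p j).2.IsPath := by
  induction j with
  | zero => exact hp
  | succ m ih => rw [sfx_succ]; exact tlW_path _ ih

lemma sfx_cons {p : T.Walk x y} {j : ℕ} (hj : j < p.length) :
    ∃ hadj : T.Adj (sfx p j).1 (sfx p (j+1)).1,
      (sfx p j).2 = SimpleGraph.Walk.cons hadj (sfx p (j+1)).2 := by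
  rw [sfx_succ]
  exact tlW_cons _ (by rw [sfx_length]; omega)

def vtx (p : T.Walk x y) (j : ℕ) : V := (sfx p j).1

def pe (p : T.Walk x y) (j : ℕ) : Sym2 V := s(vtx p j, vtx p (j+1))

lemma vtx_zero (p : T.Walk x y) : vtx p 0 = x := rfl

lemma vtx_last {p : T.Walk x y} {j : ℕ} (hj : p.length ≤ j) : vtx p j = y := by
  have h := sfx_length p j
  rw [Nat.sub_eq_zero_of_le hj] at h
  exact SimpleGraph.Walk.eq_of_length_eq_zero h

lemma pe_head {p : T.Walk x y} {j : ℕ} (hj : j < p.length) :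
    p.edges.drop j = pe p j :: p.edges.drop (j+1) := by
  obtain ⟨hadj, hcons⟩ := sfx_cons hj
  have h1 : (sfx p j).2.edges = pe p j :: (sfx p (j+1)).2.edges := by
    rw [hcons]; rfl
  rw [← sfx_edges, ← sfx_edges]
  exact h1

lemma pe_adj {p : T.Walk x y} {j : ℕ} (hj : j < p.length) :
    T.Adj (vtx p j) (vtx p (j+1)) := (sfx_cons hj).choose

lemma pe_not_mem_drop {p : T.Walk x y} (hp : p.IsPath) {j : ℕ} (hj : j < p.length) :
    pe p j ∉ p.edges.drop (j+1) := by
  have hnd : p.edges.Nodup := hp.isTrail.edges_nodup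
  have hnd2 : (p.edges.drop j).Nodup := hnd.sublist (List.drop_sublist _ _)
  rw [pe_head hj] at hnd2
  exact (List.nodup_cons.1 hnd2).1

def Rset (p : T.Walk x y) : ℕ → Set V
  | 0 => {z | T.Reachable z y}
  | (j+1) => {z | ∃ q : T.Walk z y, q.IsPath ∧ pe p j ∉ q.edges}

section Acyclic

variable (hT : T.IsAcyclic) {p : T.Walk x y} (hp : p.IsPath)

include hT

lemma walk_uniq {u : V} (q1 q2 : T.Walk u y) (h1 : q1.IsPath) (h2 : q2.IsPath) : q1 = q2 :=
  congrArg Subtype.val (hT.path_unique ⟨q1, h1⟩ ⟨q2, h2⟩)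

include hp

lemma vtx_mem_Rset {j : ℕ} (hj : j ≤ p.length) : vtx p j ∈ Rset p j := by
  cases j with
  | zero => exact ⟨(sfx p 0).2⟩
  | succ m =>
    exact ⟨(sfx p (m+1)).2, sfx_path hp _, by
      have h := pe_not_mem_drop hp (j := m) (by omega); rw [← sfx_edges] at h; exact h⟩

omit hT hp in
lemma y_mem_Rset (p : T.Walk x y) (j : ℕ) : y ∈ Rset p j := by
  cases j with
  | zero => exact SimpleGraph.Reachable.refl _
  | succ m => exact ⟨SimpleGraph.Walk.nil, SimpleGraph.Walk.IsPath.nil, by simp⟩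

lemma vtx_not_mem_Rset {j : ℕ} (hj : j < p.length) : vtx p j ∉ Rset p (j+1) := by
  rintro ⟨q, hq, hqe⟩
  have heq : q = (sfx p j).2 := walk_uniq hT q _ hq (sfx_path hp j)
  apply hqe
  rw [heq]
  have h : pe p j ∈ p.edges.drop j := by rw [pe_head hj]; simp
  rw [← sfx_edges] at h
  exact h

lemma Rset_anti {j : ℕ} (hj : j < p.length) : Rset p (j+1) ⊆ Rset p j := by
  cases j with
  | zero => rintro z ⟨q, hq, _⟩; exact ⟨q⟩
  | succ m =>
    rintro z ⟨q, hq, hqe⟩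
    refine ⟨q, hq, ?_⟩
    intro hmem
    have hsup : vtx p (m+1) ∈ q.support :=
      SimpleGraph.Walk.snd_mem_support_of_mem_edges q hmem
    have hqd : (q.dropUntil _ hsup).IsPath := hq.dropUntil hsup
    have heq : q.dropUntil _ hsup = (sfx p (m+1)).2 :=
      walk_uniq hT _ _ hqd (sfx_path hp (m+1))
    have hin : pe p (m+1) ∈ (q.dropUntil _ hsup).edges := by
      rw [heq]
      have h : pe p (m+1) ∈ p.edges.drop (m+1) := by rw [pe_head hj]; simp
      rw [← sfx_edges] at h
      exact h
    exact hqe (SimpleGraph.Walk.edges_dropUntil_subset q hsup hin)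

lemma Rset_anti_le {i j : ℕ} (hij : i ≤ j) (hj : j ≤ p.length) : Rset p j ⊆ Rset p i := by
  induction j with
  | zero => rw [Nat.le_zero.1 hij]
  | succ m ih =>
    rcases Nat.lt_or_ge i (m+1) with h | h
    · exact (Rset_anti hT hp (by omega)).trans (ih (by omega) (by omega))
    · have : i = m + 1 := by omega
      rw [this]

lemma x_not_mem_Rset {j : ℕ} (h1 : 1 ≤ j) (hj : j ≤ p.length) : x ∉ Rset p j := by
  intro hx
  exact vtx_not_mem_Rset hT hp (j := 0) (by omega)
    (Rset_anti_le hT hp h1 hj hx)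

lemma cut_edge {j : ℕ} (hj : j < p.length) {u w : V} (hadj : T.Adj u w)
    (hu : u ∉ Rset p (j+1)) (hw : w ∈ Rset p (j+1)) :
    u = vtx p j ∧ w = vtx p (j+1) := by
  obtain ⟨q, hq, hqe⟩ := hw
  by_cases hsup : u ∈ q.support
  · exfalso
    exact hu ⟨q.dropUntil u hsup, hq.dropUntil hsup,
      fun hc => hqe (SimpleGraph.Walk.edges_dropUntil_subset _ _ hc)⟩
  · have hq' : (SimpleGraph.Walk.cons hadj q).IsPath := hq.cons hsup
    have hpe : pe p j ∈ (SimpleGraph.Walk.cons hadj q).edges := by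
      by_contra hc
      exact hu ⟨SimpleGraph.Walk.cons hadj q, hq', hc⟩
    rw [SimpleGraph.Walk.edges_cons] at hpe
    rcases List.mem_cons.1 hpe with he | he
    · rcases Sym2.eq_iff.1 he with ⟨h1, h2⟩ | ⟨h1, h2⟩
      · exact ⟨h1.symm, h2.symm⟩
      · exfalso
        apply hu
        rw [← h2]
        exact vtx_mem_Rset hT hp (by omega)
    · exact absurd he hqe

end Acyclic

end PathMachinery

section LemB

open SimpleGraph

variable {V : Type*} {T : SimpleGraph V} {x y : V}

/-- `VV p j M` : there is a virtual vertical at the `j`-th path vertex,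
within the region beyond the `j`-th cut. -/
def VV (p : T.Walk x y) (j : ℕ) (M : Set (Sym2 (V × Bool))) : Prop :=
  (SimpleGraph.fromEdgeSet (M ∩ OvS (Rset p j))).Reachable
    (vtx p j, false) (vtx p j, true)

lemma lemB (hT : T.IsAcyclic) {p : T.Walk x y} (hp : p.IsPath)
    {M : Set (Sym2 (V × Bool))} (hMBB : M ⊆ (BB T).edgeSet) :
    ∀ n j, j ≤ p.length → p.length - j ≤ n →
    (∀ i, j ≤ i → i ≤ p.length → ¬ VV p i M) → ∀ b : Bool,
    ¬ (SimpleGraph.fromEdgeSet (M ∩ OvS (Rset p j))).Reachable (vtx p j, b) (y, !b) := by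
  intro n
  induction n with
  | zero =>
    intro j hj hnj hH b hreach
    have hv : vtx p j = y := vtx_last (by omega)
    rw [hv] at hreach
    apply hH j le_rfl hj
    unfold VV
    rw [hv]
    exact reach_levels hreach (by simp)
  | succ n ih =>
    intro j hj hnj hH b hreach
    by_cases hjl : p.length ≤ j
    · have hv : vtx p j = y := vtx_last hjl
      rw [hv] at hreach
      apply hH j le_rfl hj
      unfold VV
      rw [hv]
      exact reach_levels hreach (by simp)
    push_neg at hjl
    have hyB := reach_closed (D := {z : V × Bool |
        (z.1 ∈ Rset p j \ Rset p (j+1) ∧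
          (SimpleGraph.fromEdgeSet (M ∩ OvS (Rset p j \ Rset p (j+1)))).Reachable
            (vtx p j, b) z) ∨
        (z.1 ∈ Rset p (j+1) ∧ ∃ c,
          (SimpleGraph.fromEdgeSet (M ∩ OvS (Rset p j \ Rset p (j+1)))).Reachable
            (vtx p j, b) (vtx p j, c) ∧
          s(((vtx p j : V), c), (vtx p (j+1), c)) ∈ M ∧
          (SimpleGraph.fromEdgeSet (M ∩ OvS (Rset p (j+1)))).Reachable
            (vtx p (j+1), c) z)}) ?_ hreach ?_
    rotate_left
    · -- closure
      rintro ⟨u1, c1⟩ hz ⟨u2, c2⟩ hadj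
      rw [SimpleGraph.fromEdgeSet_adj] at hadj
      obtain ⟨⟨hEM, hEO⟩, hne⟩ := hadj
      have hzR : u1 ∈ Rset p j := hEO _ (Sym2.mem_mk_left _ _)
      have hz'R : u2 ∈ Rset p j := hEO _ (Sym2.mem_mk_right _ _)
      have hBBE := hMBB hEM
      rw [SimpleGraph.mem_edgeSet] at hBBE
      by_cases hz'j1 : u2 ∈ Rset p (j+1)
      · rcases hz with ⟨hzL, hzreach⟩ | ⟨hzR1, c, hc1, hc2, hc3⟩
        · -- crossing forward, from the left part
          rcases BB_adj.1 hBBE with ⟨hadjT, hlev⟩ | ⟨hnelev, heq1⟩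
          · simp only at hadjT hlev
            subst hlev
            obtain ⟨he1, he2⟩ := cut_edge hT hp hjl hadjT hzL.2 hz'j1
            subst he1; subst he2
            exact Or.inr ⟨hz'j1, c1, hzreach, hEM, SimpleGraph.Reachable.refl _⟩
          · simp only at heq1
            subst heq1
            exact absurd hz'j1 hzL.2
        · -- extend within the region
          refine Or.inr ⟨hz'j1, c, hc1, hc2, hc3.trans (SimpleGraph.Adj.reachable ?_)⟩
          rw [SimpleGraph.fromEdgeSet_adj]
          refine ⟨⟨hEM, fun w hw => ?_⟩, hne⟩
          rcases Sym2.mem_iff.1 hw with h | h <;> subst h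
          exacts [hzR1, hz'j1]
      · have hz'L : u2 ∈ Rset p j \ Rset p (j+1) := ⟨hz'R, hz'j1⟩
        rcases hz with ⟨hzL, hzreach⟩ | ⟨hzR1, c, hc1, hc2, hc3⟩
        · -- extend within the left part
          refine Or.inl ⟨hz'L, hzreach.trans (SimpleGraph.Adj.reachable ?_)⟩
          rw [SimpleGraph.fromEdgeSet_adj]
          refine ⟨⟨hEM, fun w hw => ?_⟩, hne⟩
          rcases Sym2.mem_iff.1 hw with h | h <;> subst h
          exacts [hzL, hz'L]
        · -- crossing back
          rcases BB_adj.1 hBBE with ⟨hadjT, hlev⟩ | ⟨hnelev, heq1⟩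
          · simp only at hadjT hlev
            subst hlev
            obtain ⟨he1, he2⟩ := cut_edge hT hp hjl hadjT.symm hz'j1 hzR1
            subst he1; subst he2
            by_cases hcc : c = c1
            · subst hcc
              exact Or.inl ⟨hz'L, hc1⟩
            · exfalso
              apply hH (j+1) (by omega) (by omega)
              exact reach_levels hc3 hcc
          · simp only at heq1
            subst heq1
            exact absurd hzR1 hz'j1
    · -- start
      exact Or.inl ⟨⟨vtx_mem_Rset hT hp (by omega), vtx_not_mem_Rset hT hp hjl⟩,
        SimpleGraph.Reachable.refl _⟩
    -- conclusion
    rcases hyB with ⟨hyL, _⟩ | ⟨_, c, hc1, hc2, hc3⟩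
    · exact hyL.2 (y_mem_Rset p (j+1))
    · by_cases hcb : c = b
      · subst hcb
        exact ih (j+1) (by omega) (by omega)
          (fun i h1 h2 => hH i (by omega) h2) c hc3
      · apply hH j le_rfl hj
        have hmono : SimpleGraph.fromEdgeSet (M ∩ OvS (Rset p j \ Rset p (j+1))) ≤
            SimpleGraph.fromEdgeSet (M ∩ OvS (Rset p j)) :=
          SimpleGraph.fromEdgeSet_mono
            (Set.inter_subset_inter_right _ (OvS_mono Set.diff_subset))
        exact reach_levels (hc1.mono hmono) (fun hc => hcb hc.symm)

lemma lemB_exists (hT : T.IsAcyclic) {p : T.Walk x y} (hp : p.IsPath)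
    {M : Set (Sym2 (V × Bool))} (hMBB : M ⊆ (BB T).edgeSet)
    (hconn : (SimpleGraph.fromEdgeSet (M ∩ OvS (Rset p 0))).Reachable (x, false) (y, true)) :
    ∃ j ≤ p.length, VV p j M := by
  by_contra h
  push_neg at h
  have := lemB hT hp hMBB p.length 0 (by omega) (by omega)
    (fun i h0 hi => h i hi) false
  exact this (by simpa [vtx_zero] using hconn)

lemma restrict0 {p : T.Walk x y} {M : Set (Sym2 (V × Bool))}
    (hMBB : M ⊆ (BB T).edgeSet) (hxy : T.Reachable x y)
    (hconn : (SimpleGraph.fromEdgeSet M).Reachable (x, false) (y, true)) :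
    (SimpleGraph.fromEdgeSet (M ∩ OvS (Rset p 0))).Reachable (x, false) (y, true) := by
  set D : Set (V × Bool) := {z | z.1 ∈ Rset p 0 ∧
    (SimpleGraph.fromEdgeSet (M ∩ OvS (Rset p 0))).Reachable (x, false) z} with hD
  have hclosed : ∀ z ∈ D, ∀ z', (SimpleGraph.fromEdgeSet M).Adj z z' → z' ∈ D := by
    intro z hz z' hadj
    rw [SimpleGraph.fromEdgeSet_adj] at hadj
    obtain ⟨hEM, hne⟩ := hadj
    have hBBE := hMBB hEM
    rw [SimpleGraph.mem_edgeSet] at hBBE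
    have hz'0 : z'.1 ∈ Rset p 0 := by
      rcases BB_adj.1 hBBE with ⟨hadjT, _⟩ | ⟨_, heq⟩
      · exact (SimpleGraph.Adj.reachable hadjT.symm).trans hz.1
      · rw [← heq]; exact hz.1
    refine ⟨hz'0, hz.2.trans (SimpleGraph.Adj.reachable ?_)⟩
    rw [SimpleGraph.fromEdgeSet_adj]
    refine ⟨⟨hEM, fun w hw => ?_⟩, hne⟩
    rcases Sym2.mem_iff.1 hw with h | h <;> subst h
    exacts [hz.1, hz'0]
  exact (reach_closed hclosed hconn ⟨hxy, SimpleGraph.Reachable.refl _⟩).2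

end LemB

section Main

open SimpleGraph

variable {V : Type*}

lemma flipE_comm (S Suf : Finset (Sym2 V)) (E : Sym2 (V × Bool)) :
    flipE Suf (flipE S E) = flipE S (flipE Suf E) := by
  unfold flipE
  by_cases h1 : projE E ∈ S <;> by_cases h2 : projE E ∈ Suf <;>
    simp [h1, h2, projE_mirrorE]

lemma flipE_symmDiff (S Suf : Finset (Sym2 V)) (E : Sym2 (V × Bool)) :
    flipE (symmDiff S Suf) E = flipE Suf (flipE S E) := by
  unfold flipE
  by_cases h1 : projE E ∈ S <;> by_cases h2 : projE E ∈ Suf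
  · rw [if_pos h1, if_neg (by simp [Finset.mem_symmDiff, h1, h2]),
      if_pos (by rwa [projE_mirrorE]), mirrorE_invol]
  · rw [if_pos h1, if_pos (by simp [Finset.mem_symmDiff, h1, h2]),
      if_neg (by rwa [projE_mirrorE])]
  · rw [if_neg h1, if_pos (by simp [Finset.mem_symmDiff, h1, h2]), if_pos h2]
  · rw [if_neg h1, if_neg (by simp [Finset.mem_symmDiff, h1, h2]), if_neg h2]

lemma conn_proj {T : SimpleGraph V} {M : Set (Sym2 (V × Bool))}
    (hMBB : M ⊆ (BB T).edgeSet) {u w : V} {a b : Bool}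
    (h : (SimpleGraph.fromEdgeSet M).Reachable (u, a) (w, b)) : T.Reachable u w := by
  have := reach_closed (D := {z : V × Bool | T.Reachable u z.1}) ?_ h
    (SimpleGraph.Reachable.refl _)
  · exact this
  · intro z hz z' hadj
    rw [SimpleGraph.fromEdgeSet_adj] at hadj
    have hBBE := hMBB hadj.1
    rw [SimpleGraph.mem_edgeSet] at hBBE
    rcases BB_adj.1 hBBE with ⟨hadjT, _⟩ | ⟨_, heq⟩
    · exact hz.trans (SimpleGraph.Adj.reachable hadjT)
    · show T.Reachable u z'.1
      rw [← heq]
      exact hz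

lemma sum_indicator_le_of_inj {α : Type*} (s : Finset α) (P Q : α → Prop) (f : α → α)
    (hf : ∀ a ∈ s, P a → (f a ∈ s ∧ Q (f a)))
    (hinj : ∀ a ∈ s, P a → ∀ b ∈ s, P b → f a = f b → a = b) :
    (∑ a ∈ s, if P a then (1:ℝ) else 0) ≤ (∑ a ∈ s, if Q a then (1:ℝ) else 0) := by
  classical
  have h1 : (∑ a ∈ s, if P a then (1:ℝ) else 0) = ((s.filter P).card : ℝ) := by
    simp [Finset.sum_boole]
  have h2 : (∑ a ∈ s, if Q a then (1:ℝ) else 0) = ((s.filter Q).card : ℝ) := by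
    simp [Finset.sum_boole]
  rw [h1, h2]
  have hcard : (s.filter P).card ≤ (s.filter Q).card := by
    apply Finset.card_le_card_of_injOn f
    · intro a ha
      rw [Finset.mem_coe, Finset.mem_filter] at ha
      rw [Finset.mem_coe, Finset.mem_filter]
      exact hf a ha.1 ha.2
    · intro a ha b hb hab
      rw [Finset.coe_filter, Set.mem_setOf_eq] at ha hb
      exact hinj a ha.1 ha.2 b hb.1 hb.2 hab
  exact_mod_cast hcard

variable [Fintype V]

lemma count_le (T : SimpleGraph V) (hT : T.IsAcyclic) (x y : V)
    (K : Finset (Sym2 (V × Bool))) (hK : K ⊆ edgeFin (BB T)) :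
    (∑ S ∈ (edgeFin T).powerset, if ConnIn (flipF S K) (x, false) (y, true) then (1:ℝ) else 0) ≤
    (∑ S ∈ (edgeFin T).powerset, if ConnIn (flipF S K) (x, false) (y, false) then (1:ℝ) else 0) := by
  classical
  have hMBBgen : ∀ S : Finset (Sym2 V), (↑(flipF S K) : Set (Sym2 (V × Bool))) ⊆ (BB T).edgeSet := by
    intro S E hE
    have := flipF_subset_edgeFin (T := T) S hK hE
    rwa [edgeFin, Set.mem_toFinset] at this
  by_cases hxy : T.Reachable x y
  swap
  · -- x, y not connected in T : the top event is impossible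
    have hz : ∀ S ∈ (edgeFin T).powerset,
        (if ConnIn (flipF S K) (x, false) (y, true) then (1:ℝ) else 0) = 0 := by
      intro S _
      rw [if_neg]
      intro hc
      exact hxy (conn_proj (hMBBgen S) hc)
    rw [Finset.sum_congr rfl hz]
    simp only [Finset.sum_const_zero]
    refine Finset.sum_nonneg (fun S _ => ?_)
    split <;> norm_num
  by_cases hxyeq : x = y
  · -- x = y : the bottom event is trivially true
    subst hxyeq
    refine Finset.sum_le_sum (fun S _ => ?_)
    have hc : ConnIn (flipF S K) (x, false) (x, false) := SimpleGraph.Reachable.refl _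
    rw [if_pos hc]
    split <;> norm_num
  -- main case
  obtain ⟨w⟩ := hxy
  set p : T.Walk x y := (w.toPath : T.Path x y).1 with hpdef
  have hp : p.IsPath := (w.toPath : T.Path x y).2
  have hlen : 0 < p.length := by
    rcases Nat.eq_zero_or_pos p.length with h | h
    · exact absurd (SimpleGraph.Walk.eq_of_length_eq_zero h) hxyeq
    · exact h
  -- the injection
  set jsN : Finset (Sym2 V) → ℕ := fun S =>
    if h : (((Finset.range (p.length+1)).filter
        (fun j => VV p j (↑(flipF S K) : Set (Sym2 (V × Bool)))))).Nonempty
    then (((Finset.range (p.length+1)).filter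
        (fun j => VV p j (↑(flipF S K) : Set (Sym2 (V × Bool)))))).max' h
    else 0 with hjsN
  set SufN : Finset (Sym2 V) → Finset (Sym2 V) := fun S =>
    (edgeFin T).filter (fun ed => ∀ w ∈ ed, w ∈ Rset p (jsN S)) with hSufN
  refine sum_indicator_le_of_inj _ _ _ (fun S => symmDiff S (SufN S)) ?_ ?_
  · -- the injection maps the top event into the bottom event
    intro S hSpow hconn
    have hS : S ⊆ edgeFin T := Finset.mem_powerset.1 hSpow
    set M : Set (Sym2 (V × Bool)) := ↑(flipF S K) with hM
    have hMBB : M ⊆ (BB T).edgeSet := hMBBgen S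
    have hconn0 := restrict0 (p := p) hMBB ⟨w⟩ hconn
    obtain ⟨j0, hj0le, hj0VV⟩ := lemB_exists hT hp hMBB hconn0
    have hne : (((Finset.range (p.length+1)).filter (fun j => VV p j M))).Nonempty :=
      ⟨j0, Finset.mem_filter.2 ⟨Finset.mem_range.2 (by omega), hj0VV⟩⟩
    have hjs : jsN S = (((Finset.range (p.length+1)).filter
        (fun j => VV p j M))).max' hne := by
      rw [hjsN]
      simp only [hM]
      rw [dif_pos hne]
    have hjsmem : jsN S ∈ ((Finset.range (p.length+1)).filter (fun j => VV p j M)) := by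
      rw [hjs]
      exact Finset.max'_mem _ _
    have hjsle : jsN S ≤ p.length := by
      have := (Finset.mem_filter.1 hjsmem).1
      rw [Finset.mem_range] at this
      omega
    have hjsVV : VV p (jsN S) M := (Finset.mem_filter.1 hjsmem).2
    set Suf := SufN S with hSufdef
    have hSufeq : Suf = (edgeFin T).filter (fun ed => ∀ w ∈ ed, w ∈ Rset p (jsN S)) := rfl
    set M' : Set (Sym2 (V × Bool)) := ↑(flipF (symmDiff S Suf) K) with hM'def
    have hM' : ∀ E, E ∈ M' ↔ flipE Suf E ∈ M := by
      intro E
      rw [hM'def, hM]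
      rw [Finset.mem_coe, Finset.mem_coe, mem_flipF, mem_flipF, flipE_symmDiff,
        flipE_comm]
    have hM'BB : M' ⊆ (BB T).edgeSet := hMBBgen _
    have hM'rev : ∀ E, E ∈ M ↔ flipE Suf E ∈ M' := by
      intro E
      rw [hM' (flipE Suf E), flipE_invol]
    have hSufT : ∀ ed ∈ Suf, ed ∈ T.edgeSet := by
      intro ed hed
      rw [hSufeq, Finset.mem_filter] at hed
      have := hed.1
      rwa [edgeFin, Set.mem_toFinset] at this
    have hSufOver : ∀ ed ∈ Suf, ∀ w ∈ ed, w ∈ Rset p (jsN S) := by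
      intro ed hed
      rw [hSufeq, Finset.mem_filter] at hed
      exact hed.2
    have hSufR : ∀ j, jsN S ≤ j → j ≤ p.length →
        ∀ ed ∈ T.edgeSet, (∀ w ∈ ed, w ∈ Rset p j) → ed ∈ Suf := by
      intro j hj1 hj2 ed hed hover
      rw [hSufeq, Finset.mem_filter]
      exact ⟨by rwa [edgeFin, Set.mem_toFinset], fun w hw =>
        Rset_anti_le hT hp hj1 hj2 (hover w hw)⟩
    have hbridge : (SimpleGraph.fromEdgeSet (M' ∩ OvS (Rset p (jsN S)))).Reachable
        (vtx p (jsN S), false) (vtx p (jsN S), true) :=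
      (mirror_transfer hMBB hM' hSufT (hSufR _ le_rfl hjsle) hjsVV).symm
    have hcross : ∀ u w', T.Adj u w' → u ∉ Rset p (jsN S) → w' ∈ Rset p (jsN S) →
        w' = vtx p (jsN S) := by
      intro u w' hadj hu hw'
      cases hjz : jsN S with
      | zero =>
        rw [hjz] at hu hw'
        exact absurd ((SimpleGraph.Adj.reachable hadj).trans hw') hu
      | succ m =>
        rw [hjz] at hu hw' hjsle
        exact (cut_edge hT hp (by omega) hadj hu hw').2
    have hxRs : x ∈ Rset p (jsN S) → x = vtx p (jsN S) := by
      intro hxr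
      cases hjz : jsN S with
      | zero => rfl
      | succ m =>
        rw [hjz] at hxr hjsle
        exact absurd hxr (x_not_mem_Rset hT hp (by omega) hjsle)
    refine ⟨Finset.mem_powerset.2 ?_, ?_⟩
    · intro ed hed
      rcases Finset.mem_symmDiff.1 hed with ⟨h1, _⟩ | ⟨h1, _⟩
      · exact hS h1
      · have := hSufT _ h1
        rwa [edgeFin, Set.mem_toFinset]
    · show (SimpleGraph.fromEdgeSet (↑(flipF (symmDiff S (SufN S)) K) :
        Set (Sym2 (V × Bool)))).Reachable (x, false) (y, false)
      have := surgery (x0 := x) (y0 := y) hMBB hM' hSufT (hSufR _ le_rfl hjsle) hSufOver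
        hcross hbridge hxRs (y_mem_Rset p (jsN S)) hconn
      rwa [hM'def] at this
  · -- injectivity
    intro S1 hS1 hP1 S2 hS2 hP2 heqf0
    have heqf : symmDiff S1 (SufN S1) = symmDiff S2 (SufN S2) := heqf0
    have hC : ∀ S, S ∈ (edgeFin T).powerset → ConnIn (flipF S K) (x, false) (y, true) →
        jsN S ≤ p.length ∧
        VV p (jsN S) (↑(flipF (symmDiff S (SufN S)) K) : Set (Sym2 (V × Bool))) ∧
        (∀ i, jsN S < i → i ≤ p.length →
          ¬ VV p i (↑(flipF (symmDiff S (SufN S)) K) : Set (Sym2 (V × Bool)))) := by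
      intro S hSpow hconn
      set M : Set (Sym2 (V × Bool)) := ↑(flipF S K) with hM
      have hMBB : M ⊆ (BB T).edgeSet := hMBBgen S
      have hconn0 := restrict0 (p := p) hMBB ⟨w⟩ hconn
      obtain ⟨j0, hj0le, hj0VV⟩ := lemB_exists hT hp hMBB hconn0
      have hne : (((Finset.range (p.length+1)).filter (fun j => VV p j M))).Nonempty :=
        ⟨j0, Finset.mem_filter.2 ⟨Finset.mem_range.2 (by omega), hj0VV⟩⟩
      have hjs : jsN S = (((Finset.range (p.length+1)).filter
          (fun j => VV p j M))).max' hne := by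
        rw [hjsN]
        simp only [hM]
        rw [dif_pos hne]
      have hjsmem : jsN S ∈ ((Finset.range (p.length+1)).filter (fun j => VV p j M)) := by
        rw [hjs]
        exact Finset.max'_mem _ _
      have hjsle : jsN S ≤ p.length := by
        have := (Finset.mem_filter.1 hjsmem).1
        rw [Finset.mem_range] at this
        omega
      have hjsVV : VV p (jsN S) M := (Finset.mem_filter.1 hjsmem).2
      set Suf := SufN S with hSufdef
      have hSufeq : Suf = (edgeFin T).filter (fun ed => ∀ w ∈ ed, w ∈ Rset p (jsN S)) := rfl
      set M' : Set (Sym2 (V × Bool)) := ↑(flipF (symmDiff S Suf) K) with hM'def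
      have hM' : ∀ E, E ∈ M' ↔ flipE Suf E ∈ M := by
        intro E
        rw [hM'def, hM]
        rw [Finset.mem_coe, Finset.mem_coe, mem_flipF, mem_flipF, flipE_symmDiff,
          flipE_comm]
      have hM'BB : M' ⊆ (BB T).edgeSet := hMBBgen _
      have hM'rev : ∀ E, E ∈ M ↔ flipE Suf E ∈ M' := by
        intro E
        rw [hM' (flipE Suf E), flipE_invol]
      have hSufT : ∀ ed ∈ Suf, ed ∈ T.edgeSet := by
        intro ed hed
        rw [hSufeq, Finset.mem_filter] at hed
        have := hed.1
        rwa [edgeFin, Set.mem_toFinset] at this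
      have hSufR : ∀ j, jsN S ≤ j → j ≤ p.length →
          ∀ ed ∈ T.edgeSet, (∀ w ∈ ed, w ∈ Rset p j) → ed ∈ Suf := by
        intro j hj1 hj2 ed hed hover
        rw [hSufeq, Finset.mem_filter]
        exact ⟨by rwa [edgeFin, Set.mem_toFinset], fun w hw =>
          Rset_anti_le hT hp hj1 hj2 (hover w hw)⟩
      refine ⟨hjsle, ?_, ?_⟩
      · exact (mirror_transfer hMBB hM' hSufT (hSufR _ le_rfl hjsle) hjsVV).symm
      · intro i hi1 hi2 hVVi
        have hVVMi : VV p i M :=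
          (mirror_transfer hM'BB hM'rev hSufT (hSufR i (by omega) hi2) hVVi).symm
        have hile : i ≤ jsN S := by
          rw [hjs]
          exact Finset.le_max' _ _
            (Finset.mem_filter.2 ⟨Finset.mem_range.2 (by omega), hVVMi⟩)
        omega
    obtain ⟨hle1, hVV1, hmax1⟩ := hC S1 hS1 hP1
    obtain ⟨hle2, hVV2, hmax2⟩ := hC S2 hS2 hP2
    rw [heqf] at hVV1 hmax1
    have hjeq : jsN S1 = jsN S2 := by
      by_contra hne'
      rcases Nat.lt_or_ge (jsN S1) (jsN S2) with h | h
      · exact hmax1 _ h hle2 hVV2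
      · exact hmax2 _ (by omega) hle1 hVV1
    have hSufeq12 : SufN S1 = SufN S2 := by
      rw [hSufN]
      simp only
      rw [hjeq]
    calc S1 = symmDiff (symmDiff S1 (SufN S1)) (SufN S1) :=
          (symmDiff_symmDiff_cancel_right _ _).symm
      _ = symmDiff (symmDiff S2 (SufN S2)) (SufN S2) := by rw [heqf, hSufeq12]
      _ = S2 := symmDiff_symmDiff_cancel_right _ _

end Main

end BunkbedAux

/-- Every finite forest satisfies the bunkbed conjecture. -/
theorem bunkbed_forest {V : Type*} [Fintype V] (T : SimpleGraph V) (hT : T.IsAcyclic)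
    (μ : Sym2 (V × Bool) → ℝ) (hμ : IsWeight (BB T) μ) (hsym : IsSymWeight T μ)
    (x y : V) :
    percProb (BB T) μ (fun K => ConnIn K (x, false) (y, false)) ≥
      percProb (BB T) μ (fun K => ConnIn K (x, false) (y, true)) := by
  exact BunkbedAux.percProb_le_of_counts hμ hsym
    (fun K => ConnIn K (x, false) (y, true)) (fun K => ConnIn K (x, false) (y, false))
    (fun K hK => BunkbedAux.count_le T hT x y K (Finset.mem_powerset.1 hK))
end

section
/- In the cut-vertex setup, let μ be a weight on F and define a weight μ' on H by μ'(e) = μ(e) for every edge e ≠ v⁻v⁺ of H, and μ'(v⁻v⁺) = P_{G,μ|_{E(G)}}(v⁻ ∼_G v⁺). Then for every pair of vertices x, y ∈ V(H), P_{F,μ}(x ∼_F y) = P_{H,μ'}(x ∼_H y). -/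
open Classical

/-- The copy of `BB (F̄[S])` sitting inside `BB F̄` (as a spanning subgraph on `V × Bool`):
its edges are the two horizontal copies of the edges of `F̄` inside `S`, together with the
vertical edges at the vertices of `S`. -/
def bbSide {V : Type*} (Fbar : SimpleGraph V) (S : Set V) : SimpleGraph (V × Bool) :=
  restrict (BB Fbar) {p : V × Bool | p.1 ∈ S}

/-- `H₀`: the graph `H = BB (F̄[T])` with the vertical edge `v⁻v⁺` deleted. -/
def bbSideDel {V : Type*} (Fbar : SimpleGraph V) (T : Set V) (v : V) :
    SimpleGraph (V × Bool) :=
  (bbSide Fbar T).deleteEdges {s((v, false), (v, true))}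

open Finset SimpleGraph

section Aux

lemma sum_powerset_union_disj {α M : Type*} [DecidableEq α] [AddCommMonoid M]
    (s t : Finset α) (hd : Disjoint s t) (f : Finset α → M) :
    ∑ K ∈ (s ∪ t).powerset, f K = ∑ A ∈ s.powerset, ∑ B ∈ t.powerset, f (A ∪ B) := by
  classical
  induction s using Finset.induction generalizing f with
  | empty => simp
  | @insert a s ha ih =>
    have hat : a ∉ t := fun h => (Finset.disjoint_left.1 hd (Finset.mem_insert_self a s)) h
    have ha' : a ∉ s ∪ t := by simp [ha, hat]
    have hd' : Disjoint s t := hd.mono_left (Finset.subset_insert a s)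
    rw [Finset.insert_union, Finset.sum_powerset_insert ha', Finset.sum_powerset_insert ha,
      ih hd' f, ih hd' (fun K => f (insert a K))]
    congr 1
    refine Finset.sum_congr rfl fun A _ => Finset.sum_congr rfl fun B _ => ?_
    rw [Finset.insert_union]

lemma sum_percWeight_one {α : Type*} [DecidableEq α] (s : Finset α) (μ : α → ℝ) :
    ∑ K ∈ s.powerset, (∏ e ∈ K, μ e) * ∏ e ∈ s \ K, (1 - μ e) = 1 := by
  rw [← Finset.prod_add]
  simp

lemma reach_transfer {α : Type*} {G₁ G₂ : SimpleGraph α}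
    (h : ∀ a b, G₁.Adj a b → G₂.Reachable a b) {a b : α} (hr : G₁.Reachable a b) :
    G₂.Reachable a b := by
  obtain ⟨w⟩ := hr
  induction w with
  | nil => exact Reachable.refl _
  | cons h' p ih => exact (h _ _ h').trans ih

lemma bb_adj {V : Type*} (Fbar : SimpleGraph V) (a b : V × Bool) :
    (BB Fbar).Adj a b ↔ (Fbar.Adj a.1 b.1 ∧ a.2 = b.2) ∨ (a.1 = b.1 ∧ a.2 ≠ b.2) := by
  simp only [BB, SimpleGraph.boxProd_adj, SimpleGraph.top_adj]
  tauto

lemma mem_edgeFin {V : Type*} [Fintype V] (G : SimpleGraph V) (a b : V) :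
    s(a, b) ∈ edgeFin G ↔ G.Adj a b := by
  simp [edgeFin]

lemma mem_edgeFin_bbSide {V : Type*} [Fintype V] (Fbar : SimpleGraph V) (S : Set V)
    (a b : V × Bool) :
    s(a, b) ∈ edgeFin (bbSide Fbar S) ↔ (BB Fbar).Adj a b ∧ a.1 ∈ S ∧ b.1 ∈ S := by
  rw [mem_edgeFin]
  rfl

lemma mem_edgeFin_bbSideDel {V : Type*} [Fintype V] (Fbar : SimpleGraph V) (T : Set V) (v : V)
    (a b : V × Bool) :
    s(a, b) ∈ edgeFin (bbSideDel Fbar T v) ↔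
      ((BB Fbar).Adj a b ∧ a.1 ∈ T ∧ b.1 ∈ T) ∧ s(a, b) ≠ s((v, false), (v, true)) := by
  rw [mem_edgeFin, bbSideDel, SimpleGraph.deleteEdges_adj]
  simp only [Set.mem_singleton_iff]
  exact Iff.rfl

end Aux
section EdgeSets

variable {V : Type*} [Fintype V] (Fbar : SimpleGraph V) (v : V) (S T : Set V)

lemma edgeFin_union (hST : S ∩ T = {v}) (hUnion : S ∪ T = Set.univ)
    (hSep : ∀ x ∈ S, ∀ y ∈ T, Fbar.Adj x y → x = v ∨ y = v) :
    edgeFin (BB Fbar) = edgeFin (bbSide Fbar S) ∪ edgeFin (bbSideDel Fbar T v) := by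
  have hv : v ∈ S ∩ T := by rw [hST]; rfl
  have hmem : ∀ u : V, u ∈ S ∨ u ∈ T := fun u => by
    have : u ∈ S ∪ T := by rw [hUnion]; trivial
    exact this
  ext e
  induction e using Sym2.ind with
  | _ a b =>
    rw [Finset.mem_union, mem_edgeFin_bbSide, mem_edgeFin_bbSideDel, mem_edgeFin]
    constructor
    · intro h
      by_cases haT : a.1 ∈ T
      · by_cases hbT : b.1 ∈ T
        · by_cases hev : s(a, b) = s((v, false), (v, true))
          · left
            refine ⟨h, ?_, ?_⟩
            · rcases Sym2.eq_iff.mp hev with ⟨h1, _⟩ | ⟨h1, _⟩ <;>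
                simp only [h1] <;> exact hv.1
            · rcases Sym2.eq_iff.mp hev with ⟨_, h2⟩ | ⟨_, h2⟩ <;>
                simp only [h2] <;> exact hv.1
          · exact Or.inr ⟨⟨h, haT, hbT⟩, hev⟩
        · -- a.1 ∈ T, b.1 ∉ T, so b.1 ∈ S
          have hbS : b.1 ∈ S := (hmem b.1).resolve_right hbT
          rcases (bb_adj Fbar a b).mp h with ⟨hadj, _⟩ | ⟨heq, _⟩
          · rcases hSep b.1 hbS a.1 haT hadj.symm with hb | ha
            · exact absurd (show b.1 ∈ T by rw [hb]; exact hv.2) hbT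
            · exact Or.inl ⟨h, show a.1 ∈ S by rw [ha]; exact hv.1, hbS⟩
          · exact absurd (show b.1 ∈ T by rw [← heq]; exact haT) hbT
      · have haS : a.1 ∈ S := (hmem a.1).resolve_right haT
        by_cases hbS : b.1 ∈ S
        · exact Or.inl ⟨h, haS, hbS⟩
        · have hbT : b.1 ∈ T := (hmem b.1).resolve_left hbS
          rcases (bb_adj Fbar a b).mp h with ⟨hadj, _⟩ | ⟨heq, _⟩
          · rcases hSep a.1 haS b.1 hbT hadj with ha | hb
            · exact absurd (show a.1 ∈ T by rw [ha]; exact hv.2) haT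
            · exact absurd (show b.1 ∈ S by rw [hb]; exact hv.1) hbS
          · exact absurd (show b.1 ∈ S by rw [← heq]; exact haS) hbS
    · rintro (⟨h, _⟩ | ⟨⟨h, _⟩, _⟩) <;> exact h

lemma edgeFin_disjoint (hST : S ∩ T = {v}) :
    Disjoint (edgeFin (bbSide Fbar S)) (edgeFin (bbSideDel Fbar T v)) := by
  rw [Finset.disjoint_left]
  intro e heS heH
  induction e using Sym2.ind with
  | _ a b =>
    obtain ⟨a1, a2⟩ := a
    obtain ⟨b1, b2⟩ := b
    obtain ⟨hadj, haS, hbS⟩ := (mem_edgeFin_bbSide Fbar S _ _).mp heS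
    obtain ⟨⟨_, haT, hbT⟩, hne⟩ := (mem_edgeFin_bbSideDel Fbar T v _ _).mp heH
    have ha : a1 = v := by
      have : a1 ∈ S ∩ T := ⟨haS, haT⟩
      rwa [hST] at this
    have hb : b1 = v := by
      have : b1 ∈ S ∩ T := ⟨hbS, hbT⟩
      rwa [hST] at this
    subst ha hb
    rcases (bb_adj Fbar _ _).mp hadj with ⟨hadj', _⟩ | ⟨_, hne2⟩
    · exact Fbar.loopless.irrefl _ hadj'
    · apply hne
      cases a2 <;> cases b2 <;> simp_all [Sym2.eq_swap]

lemma edgeFin_bbSide_T (hvT : v ∈ T) :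
    edgeFin (bbSide Fbar T) =
      insert (s((v, false), (v, true))) (edgeFin (bbSideDel Fbar T v)) := by
  have hev : s(((v : V), false), ((v : V), true)) ∈ edgeFin (bbSide Fbar T) := by
    rw [mem_edgeFin_bbSide]
    exact ⟨(bb_adj Fbar _ _).mpr (Or.inr ⟨rfl, by simp⟩), hvT, hvT⟩
  have hdel : edgeFin (bbSideDel Fbar T v) =
      (edgeFin (bbSide Fbar T)).erase (s((v, false), (v, true))) := by
    ext e
    induction e using Sym2.ind with
    | _ a b =>
      rw [mem_edgeFin_bbSideDel, Finset.mem_erase, mem_edgeFin_bbSide]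
      tauto
  rw [hdel, Finset.insert_erase hev]

lemma evv_not_mem_del :
    s(((v : V), false), ((v : V), true)) ∉ edgeFin (bbSideDel Fbar T v) := by
  intro h
  exact ((mem_edgeFin_bbSideDel Fbar T v _ _).mp h).2 rfl

end EdgeSets
section Conn

lemma fromEdgeSet_sub_left {α : Type*} [DecidableEq α] {K1 K2 : Finset α} :
    (↑K1 : Set α) ⊆ ↑(K1 ∪ K2) := by
  intro e he
  rw [Finset.coe_union]
  exact Or.inl he

lemma fromEdgeSet_sub_right {α : Type*} [DecidableEq α] {K1 K2 : Finset α} :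
    (↑K2 : Set α) ⊆ ↑(K1 ∪ K2) := by
  intro e he
  rw [Finset.coe_union]
  exact Or.inr he

variable {V : Type*} [Fintype V] {Fbar : SimpleGraph V} {v : V} {S T : Set V}
variable {K1 K2 : Finset (Sym2 (V × Bool))}

/-- Any walk in `K1 ∪ K2` starting on the S-side and ending on the T-side passes through
a copy of `v`, with the initial segment inside `K1`. -/
lemma passage (hST : S ∩ T = {v})
    (hK1 : K1 ⊆ edgeFin (bbSide Fbar S)) (hK2 : K2 ⊆ edgeFin (bbSideDel Fbar T v))
    {c b : V × Bool}
    (W : (SimpleGraph.fromEdgeSet (↑(K1 ∪ K2) : Set (Sym2 (V × Bool)))).Walk c b) :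
    c.1 ∈ S → b.1 ∈ T →
    ∃ u, u.1 = v ∧ (SimpleGraph.fromEdgeSet (↑K1 : Set (Sym2 (V × Bool)))).Reachable c u ∧
      ∃ W' : (SimpleGraph.fromEdgeSet (↑(K1 ∪ K2) : Set (Sym2 (V × Bool)))).Walk u b,
        W'.length ≤ W.length := by
  induction W with
  | nil =>
    intro hcS hbT
    have : _ ∈ S ∩ T := ⟨hcS, hbT⟩
    rw [hST] at this
    exact ⟨_, this, Reachable.refl _, SimpleGraph.Walk.nil, le_refl _⟩
  | @cons c d b h p ih =>
    intro hcS hbT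
    by_cases hc : c.1 = v
    · exact ⟨c, hc, Reachable.refl _, SimpleGraph.Walk.cons h p, le_refl _⟩
    · obtain ⟨hmem, hne⟩ := (SimpleGraph.fromEdgeSet_adj _).mp h
      rw [Finset.mem_coe, Finset.mem_union] at hmem
      rcases hmem with h1 | h2
      · have hdS : d.1 ∈ S := by
          obtain ⟨a', b'⟩ := Sym2.mem_iff.mp (Sym2.mem_mk_right c d) |>.elim (fun _ => True.intro) (fun _ => True.intro) |> fun _ => (rfl : d = d)
          have := (mem_edgeFin_bbSide Fbar S c d).mp (hK1 h1)
          exact this.2.2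
        have hadj1 : (SimpleGraph.fromEdgeSet (↑K1 : Set (Sym2 (V × Bool)))).Adj c d :=
          (SimpleGraph.fromEdgeSet_adj _).mpr ⟨Finset.mem_coe.mpr h1, hne⟩
        obtain ⟨u, hu, hr, W', hlen⟩ := ih hdS hbT
        exact ⟨u, hu, hadj1.reachable.trans hr, W', hlen.trans (Nat.le_succ _)⟩
      · have hcT : c.1 ∈ T := ((mem_edgeFin_bbSideDel Fbar T v c d).mp (hK2 h2)).1.2.1
        have : c.1 ∈ S ∩ T := ⟨hcS, hcT⟩
        rw [hST] at this
        exact absurd this hc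

lemma conn_forward (hST : S ∩ T = {v}) (hvT : v ∈ T)
    (hK1 : K1 ⊆ edgeFin (bbSide Fbar S)) (hK2 : K2 ⊆ edgeFin (bbSideDel Fbar T v))
    (K' : Finset (Sym2 (V × Bool))) (hsub : K2 ⊆ K')
    (hins : ConnIn K1 ((v : V), false) ((v : V), true) → s(((v : V), false), ((v : V), true)) ∈ K') :
    ∀ n {a b : V × Bool}
      (W : (SimpleGraph.fromEdgeSet (↑(K1 ∪ K2) : Set (Sym2 (V × Bool)))).Walk a b),
      W.length ≤ n → a.1 ∈ T → b.1 ∈ T → ConnIn K' a b := by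
  intro n
  induction n with
  | zero =>
    intro a b W hlen _ _
    have : a = b := W.eq_of_length_eq_zero (Nat.le_zero.mp hlen)
    subst this
    exact Reachable.refl _
  | succ n ih =>
    intro a b W hlen haT hbT
    cases W with
    | nil => exact Reachable.refl _
    | @cons _ c _ h p =>
      have hlen' : p.length ≤ n := by
        simpa [Nat.succ_le_succ_iff] using hlen
      obtain ⟨hmem, hne⟩ := (SimpleGraph.fromEdgeSet_adj _).mp h
      rw [Finset.mem_coe, Finset.mem_union] at hmem
      rcases hmem with h1 | h2
      · -- edge in K1 : a is a copy of v
        obtain ⟨_, haS, hcS⟩ := (mem_edgeFin_bbSide Fbar S a c).mp (hK1 h1)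
        have hav : a.1 = v := by
          have : a.1 ∈ S ∩ T := ⟨haS, haT⟩
          rwa [hST] at this
        obtain ⟨u, huv, hreach, W', hlenW'⟩ := passage hST hK1 hK2 p hcS hbT
        have htail : ConnIn K' u b := ih W' (hlenW'.trans hlen') (by rw [huv]; exact hvT) hbT
        by_cases hau : a = u
        · rw [hau]; exact htail
        · have hru : (SimpleGraph.fromEdgeSet (↑K1 : Set (Sym2 (V × Bool)))).Reachable a u :=
            ((SimpleGraph.fromEdgeSet_adj _).mpr ⟨Finset.mem_coe.mpr h1, hne⟩).reachable.trans hreach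
          obtain ⟨a1, a2⟩ := a
          obtain ⟨u1, u2⟩ := u
          simp only at hav huv
          subst a1
          subst u1
          have h2 : a2 ≠ u2 := fun he => hau (by rw [he])
          have hconn : ConnIn K1 ((v : V), false) ((v : V), true) := by
            cases a2 <;> cases u2 <;> first
              | exact absurd rfl h2
              | exact hru
              | exact hru.symm
          have hadj : (SimpleGraph.fromEdgeSet (↑K' : Set (Sym2 (V × Bool)))).Adj (v, a2) (v, u2) := by
            refine (SimpleGraph.fromEdgeSet_adj _).mpr ⟨Finset.mem_coe.mpr ?_, hau⟩
            cases a2 <;> cases u2 <;> first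
              | exact absurd rfl h2
              | exact hins hconn
              | (rw [Sym2.eq_swap]; exact hins hconn)
          exact hadj.reachable.trans htail
      · -- edge in K2
        have hcT : c.1 ∈ T := ((mem_edgeFin_bbSideDel Fbar T v a c).mp (hK2 h2)).1.2.2
        have hadj : (SimpleGraph.fromEdgeSet (↑K' : Set (Sym2 (V × Bool)))).Adj a c :=
          (SimpleGraph.fromEdgeSet_adj _).mpr ⟨Finset.mem_coe.mpr (hsub h2), hne⟩
        exact hadj.reachable.trans (ih p hlen' hcT hbT)

lemma conn_key (hST : S ∩ T = {v}) (hvT : v ∈ T)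
    (hK1 : K1 ⊆ edgeFin (bbSide Fbar S)) (hK2 : K2 ⊆ edgeFin (bbSideDel Fbar T v))
    {x y : V × Bool} (hx : x.1 ∈ T) (hy : y.1 ∈ T) :
    ConnIn (K1 ∪ K2) x y ↔
      ConnIn (if ConnIn K1 ((v : V), false) ((v : V), true)
        then insert (s(((v : V), false), ((v : V), true))) K2 else K2) x y := by
  by_cases hc : ConnIn K1 ((v : V), false) ((v : V), true)
  · rw [if_pos hc]
    constructor
    · intro h
      obtain ⟨w⟩ := h
      exact conn_forward hST hvT hK1 hK2 _ (Finset.subset_insert _ _)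
        (fun _ => Finset.mem_insert_self _ _) w.length w le_rfl hx hy
    · intro h
      refine reach_transfer (fun a b hab => ?_) h
      obtain ⟨hmem, hne⟩ := (SimpleGraph.fromEdgeSet_adj _).mp hab
      rw [Finset.mem_coe, Finset.mem_insert] at hmem
      rcases hmem with hev | hK
      · have hmono : (SimpleGraph.fromEdgeSet (↑K1 : Set (Sym2 (V × Bool)))) ≤
            SimpleGraph.fromEdgeSet (↑(K1 ∪ K2) : Set (Sym2 (V × Bool))) :=
          SimpleGraph.fromEdgeSet_mono fromEdgeSet_sub_left
        rcases Sym2.eq_iff.mp hev with ⟨h1, h2⟩ | ⟨h1, h2⟩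
        · rw [h1, h2]; exact hc.mono hmono
        · rw [h1, h2]; exact hc.symm.mono hmono
      · exact ((SimpleGraph.fromEdgeSet_adj _).mpr
          ⟨Finset.mem_coe.mpr (Finset.mem_union_right _ hK), hne⟩).reachable
  · rw [if_neg hc]
    constructor
    · intro h
      obtain ⟨w⟩ := h
      exact conn_forward hST hvT hK1 hK2 _ le_rfl (fun h' => absurd h' hc)
        w.length w le_rfl hx hy
    · intro h
      exact h.mono (SimpleGraph.fromEdgeSet_mono fromEdgeSet_sub_right)

end Conn
section Split

lemma mem_del_ne {V : Type*} [Fintype V] (Fbar : SimpleGraph V) (T : Set V) (v : V) :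
    ∀ e ∈ edgeFin (bbSideDel Fbar T v), e ≠ s(((v : V), false), ((v : V), true)) := by
  intro e he
  induction e using Sym2.ind with
  | _ a b => exact ((mem_edgeFin_bbSideDel Fbar T v a b).mp he).2

lemma prod_split {α : Type*} [DecidableEq α] (s t A B : Finset α) (f g : α → ℝ)
    (hdisj : Disjoint s t) (hA : A ⊆ s) (hB : B ⊆ t) :
    (∏ e ∈ A ∪ B, f e) * ∏ e ∈ (s ∪ t) \ (A ∪ B), g e =
      ((∏ e ∈ A, f e) * ∏ e ∈ s \ A, g e) * ((∏ e ∈ B, f e) * ∏ e ∈ t \ B, g e) := by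
  have hAB : Disjoint A B := hdisj.mono hA hB
  have hsd : (s ∪ t) \ (A ∪ B) = (s \ A) ∪ (t \ B) := by
    ext e
    simp only [Finset.mem_sdiff, Finset.mem_union, not_or]
    constructor
    · rintro ⟨hs | ht, hA', hB'⟩
      · exact Or.inl ⟨hs, hA'⟩
      · exact Or.inr ⟨ht, hB'⟩
    · rintro (⟨hs, hA'⟩ | ⟨ht, hB'⟩)
      · exact ⟨Or.inl hs, hA', fun hB'' => (Finset.disjoint_left.mp hdisj hs) (hB hB'')⟩
      · exact ⟨Or.inr ht, fun hA'' => (Finset.disjoint_left.mp hdisj (hA hA'')) ht, hB'⟩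
  rw [Finset.prod_union hAB, hsd,
    Finset.prod_union (hdisj.mono Finset.sdiff_subset Finset.sdiff_subset)]
  ring

set_option maxHeartbeats 2000000 in
lemma percWeight_split {V : Type*} [Fintype V] (Fbar : SimpleGraph V) (v : V) (S T : Set V)
    (hEF : edgeFin (BB Fbar) = edgeFin (bbSide Fbar S) ∪ edgeFin (bbSideDel Fbar T v))
    (hdisj : Disjoint (edgeFin (bbSide Fbar S)) (edgeFin (bbSideDel Fbar T v)))
    (μ : Sym2 (V × Bool) → ℝ) {A B : Finset (Sym2 (V × Bool))}
    (hA : A ⊆ edgeFin (bbSide Fbar S)) (hB : B ⊆ edgeFin (bbSideDel Fbar T v)) :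
    percWeight (BB Fbar) μ (A ∪ B) =
      percWeight (bbSide Fbar S) μ A * percWeight (bbSideDel Fbar T v) μ B := by
  simp only [percWeight]
  rw [hEF]
  convert prod_split (edgeFin (bbSide Fbar S)) (edgeFin (bbSideDel Fbar T v)) A B μ
    (fun e => 1 - μ e) hdisj hA hB using 4
  · congr 1
    exact Subsingleton.elim _ _
  · ext e
    simp [Finset.mem_sdiff]
  · ext e
    simp [Finset.mem_sdiff]

end Split

lemma percWeight_congr_set {V : Type*} [Fintype V] (G : SimpleGraph V) (μ : Sym2 V → ℝ)
    (K D : Finset (Sym2 V)) (hD : ∀ e, e ∈ D ↔ e ∈ edgeFin G ∧ e ∉ K) :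
    percWeight G μ K = (∏ e ∈ K, μ e) * ∏ e ∈ D, (1 - μ e) := by
  simp only [percWeight]
  refine congrArg _ (Finset.prod_congr ?_ fun _ _ => rfl)
  ext e
  rw [Finset.mem_sdiff]
  exact (hD e).symm

/-- Change of weight lemma: percolation in F between two vertices of H agrees with
percolation in H where the vertical edge v⁻v⁺ gets weight P_{G,μ}(v⁻ ∼ v⁺). -/
theorem change_of_weight {V : Type*} [Fintype V]
    (Fbar : SimpleGraph V) (v : V) (S T : Set V)
    (hcut : IsCutVertex Fbar v)
    (hST : S ∩ T = {v}) (hUnion : S ∪ T = Set.univ)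
    (hSep : ∀ x ∈ S, ∀ y ∈ T, Fbar.Adj x y → x = v ∨ y = v)
    (μ : Sym2 (V × Bool) → ℝ) (hμ : IsWeight (BB Fbar) μ)
    (x y : V × Bool) (hx : x.1 ∈ T) (hy : y.1 ∈ T) :
    percProb (BB Fbar) μ (fun K => ConnIn K x y) =
      percProb (bbSide Fbar T)
        (fun e => if e = s((v, false), (v, true)) then
            percProb (bbSide Fbar S) μ (fun K => ConnIn K (v, false) (v, true))
          else μ e)
        (fun K => ConnIn K x y) := by
  have hv : v ∈ S ∩ T := by rw [hST]; rfl
  have hEF := edgeFin_union Fbar v S T hST hUnion hSep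
  have hdisj := edgeFin_disjoint Fbar v S T hST
  have hEH := edgeFin_bbSide_T Fbar v T hv.2
  have hnot := evv_not_mem_del Fbar v T
  set p : ℝ := percProb (bbSide Fbar S) μ (fun K => ConnIn K (v, false) (v, true)) with hp
  set μ' : Sym2 (V × Bool) → ℝ :=
    fun e => if e = s((v, false), (v, true)) then p else μ e with hμ'
  have hpw : ∀ (G' : SimpleGraph (V × Bool)) (ν : Sym2 (V × Bool) → ℝ)
      (A : Finset (Sym2 (V × Bool))),
      percWeight G' ν A = (∏ e ∈ A, ν e) * ∏ e ∈ edgeFin G' \ A, (1 - ν e) :=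
    fun G' ν A => percWeight_congr_set G' ν A _ fun e => by simp [Finset.mem_sdiff]
  have htot : ∑ A ∈ (edgeFin (bbSide Fbar S)).powerset, percWeight (bbSide Fbar S) μ A = 1 := by
    simp only [hpw]
    exact sum_percWeight_one _ μ
  have hpeq : ∑ A ∈ (edgeFin (bbSide Fbar S)).powerset,
      (if ConnIn A ((v : V), false) ((v : V), true)
        then percWeight (bbSide Fbar S) μ A else 0) = p := by
    rw [hp]
    rfl
  have hsplit : ∑ A ∈ (edgeFin (bbSide Fbar S)).powerset,
      (if ConnIn A ((v : V), false) ((v : V), true)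
        then 0 else percWeight (bbSide Fbar S) μ A) = 1 - p := by
    have h2 : ∀ A ∈ (edgeFin (bbSide Fbar S)).powerset, percWeight (bbSide Fbar S) μ A =
        (if ConnIn A ((v : V), false) ((v : V), true)
          then percWeight (bbSide Fbar S) μ A else 0) +
        (if ConnIn A ((v : V), false) ((v : V), true)
          then 0 else percWeight (bbSide Fbar S) μ A) := by
      intro A _
      by_cases h : ConnIn A ((v : V), false) ((v : V), true) <;> simp [h]
    rw [Finset.sum_congr rfl h2, Finset.sum_add_distrib, hpeq] at htot
    linarith
  have hL : percProb (BB Fbar) μ (fun K => ConnIn K x y)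
      = ∑ B ∈ (edgeFin (bbSideDel Fbar T v)).powerset,
          ((if ConnIn (insert (s(((v : V), false), ((v : V), true))) B) x y then p else 0)
            + (if ConnIn B x y then 1 - p else 0)) * percWeight (bbSideDel Fbar T v) μ B := by
    rw [percProb, hEF, sum_powerset_union_disj _ _ hdisj, Finset.sum_comm]
    refine Finset.sum_congr rfl fun B hB => ?_
    have hB' : B ⊆ edgeFin (bbSideDel Fbar T v) := Finset.mem_powerset.mp hB
    have step1 : ∀ A ∈ (edgeFin (bbSide Fbar S)).powerset,
        (if ConnIn (A ∪ B) x y then percWeight (BB Fbar) μ (A ∪ B) else 0)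
        = (if ConnIn A ((v : V), false) ((v : V), true)
            then (if ConnIn (insert (s(((v : V), false), ((v : V), true))) B) x y
              then percWeight (bbSide Fbar S) μ A else 0)
            else (if ConnIn B x y then percWeight (bbSide Fbar S) μ A else 0))
          * percWeight (bbSideDel Fbar T v) μ B := by
      intro A hA
      have hA' : A ⊆ edgeFin (bbSide Fbar S) := Finset.mem_powerset.mp hA
      have hkey := conn_key hST hv.2 hA' hB' hx hy
      by_cases hcA : ConnIn A ((v : V), false) ((v : V), true)
      · rw [if_pos hcA] at hkey
        rw [if_pos hcA, if_congr hkey rfl rfl,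
          percWeight_split Fbar v S T hEF hdisj μ hA' hB']
        by_cases hC1 : ConnIn (insert (s(((v : V), false), ((v : V), true))) B) x y
        · rw [if_pos hC1, if_pos hC1]
        · rw [if_neg hC1, if_neg hC1, zero_mul]
      · rw [if_neg hcA] at hkey
        rw [if_neg hcA, if_congr hkey rfl rfl,
          percWeight_split Fbar v S T hEF hdisj μ hA' hB']
        by_cases hC0 : ConnIn B x y
        · rw [if_pos hC0, if_pos hC0]
        · rw [if_neg hC0, if_neg hC0, zero_mul]
    rw [Finset.sum_congr rfl step1, ← Finset.sum_mul]
    congr 1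
    by_cases hC1 : ConnIn (insert (s(((v : V), false), ((v : V), true))) B) x y <;>
      by_cases hC0 : ConnIn B x y
    · rw [if_pos hC1, if_pos hC0]
      have hh : ∀ A ∈ (edgeFin (bbSide Fbar S)).powerset,
          (if ConnIn A ((v : V), false) ((v : V), true)
            then (if ConnIn (insert (s(((v : V), false), ((v : V), true))) B) x y
              then percWeight (bbSide Fbar S) μ A else 0)
            else (if ConnIn B x y then percWeight (bbSide Fbar S) μ A else 0))
          = percWeight (bbSide Fbar S) μ A := by
        intro A _
        by_cases h : ConnIn A ((v : V), false) ((v : V), true) <;> simp [h, hC1, hC0]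
      rw [Finset.sum_congr rfl hh, htot]
      ring
    · rw [if_pos hC1, if_neg hC0, add_zero]
      have hh : ∀ A ∈ (edgeFin (bbSide Fbar S)).powerset,
          (if ConnIn A ((v : V), false) ((v : V), true)
            then (if ConnIn (insert (s(((v : V), false), ((v : V), true))) B) x y
              then percWeight (bbSide Fbar S) μ A else 0)
            else (if ConnIn B x y then percWeight (bbSide Fbar S) μ A else 0))
          = (if ConnIn A ((v : V), false) ((v : V), true)
              then percWeight (bbSide Fbar S) μ A else 0) := by
        intro A _
        by_cases h : ConnIn A ((v : V), false) ((v : V), true) <;> simp [h, hC1, hC0]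
      rw [Finset.sum_congr rfl hh, hpeq]
    · rw [if_neg hC1, if_pos hC0, zero_add]
      have hh : ∀ A ∈ (edgeFin (bbSide Fbar S)).powerset,
          (if ConnIn A ((v : V), false) ((v : V), true)
            then (if ConnIn (insert (s(((v : V), false), ((v : V), true))) B) x y
              then percWeight (bbSide Fbar S) μ A else 0)
            else (if ConnIn B x y then percWeight (bbSide Fbar S) μ A else 0))
          = (if ConnIn A ((v : V), false) ((v : V), true)
              then 0 else percWeight (bbSide Fbar S) μ A) := by
        intro A _
        by_cases h : ConnIn A ((v : V), false) ((v : V), true) <;> simp [h, hC1, hC0]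
      rw [Finset.sum_congr rfl hh, hsplit]
    · rw [if_neg hC1, if_neg hC0, add_zero]
      have hh : ∀ A ∈ (edgeFin (bbSide Fbar S)).powerset,
          (if ConnIn A ((v : V), false) ((v : V), true)
            then (if ConnIn (insert (s(((v : V), false), ((v : V), true))) B) x y
              then percWeight (bbSide Fbar S) μ A else 0)
            else (if ConnIn B x y then percWeight (bbSide Fbar S) μ A else 0))
          = 0 := by
        intro A _
        by_cases h : ConnIn A ((v : V), false) ((v : V), true) <;> simp [h, hC1, hC0]
      rw [Finset.sum_congr rfl hh, Finset.sum_const_zero]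
  have hw1 : ∀ B ⊆ edgeFin (bbSideDel Fbar T v),
      percWeight (bbSide Fbar T) μ' B =
        (1 - p) * percWeight (bbSideDel Fbar T v) μ B := by
    intro B hB
    have hevB : s(((v : V), false), ((v : V), true)) ∉ B := fun h => hnot (hB h)
    simp only [hpw]
    rw [hEH, Finset.insert_sdiff_of_notMem _ hevB,
      Finset.prod_insert (fun h => hnot (Finset.mem_sdiff.mp h).1)]
    have he1 : ∏ e ∈ B, μ' e = ∏ e ∈ B, μ e :=
      Finset.prod_congr rfl fun e he => by
        simp only [hμ']
        exact if_neg (mem_del_ne Fbar T v e (hB he))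
    have he2 : ∏ e ∈ edgeFin (bbSideDel Fbar T v) \ B, (1 - μ' e)
        = ∏ e ∈ edgeFin (bbSideDel Fbar T v) \ B, (1 - μ e) :=
      Finset.prod_congr rfl fun e he => by
        simp only [hμ']
        rw [if_neg (mem_del_ne Fbar T v e (Finset.mem_sdiff.mp he).1)]
    have he3 : μ' (s(((v : V), false), ((v : V), true))) = p := by
      simp [hμ']
    rw [he1, he2, he3]
    ring
  have hw2 : ∀ B ⊆ edgeFin (bbSideDel Fbar T v),
      percWeight (bbSide Fbar T) μ' (insert (s(((v : V), false), ((v : V), true))) B) =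
        p * percWeight (bbSideDel Fbar T v) μ B := by
    intro B hB
    have hevB : s(((v : V), false), ((v : V), true)) ∉ B := fun h => hnot (hB h)
    simp only [hpw]
    have hsd2 : edgeFin (bbSide Fbar T) \ insert (s(((v : V), false), ((v : V), true))) B
        = edgeFin (bbSideDel Fbar T v) \ B := by
      rw [hEH]
      ext e
      simp only [Finset.mem_sdiff, Finset.mem_insert, not_or]
      constructor
      · rintro ⟨he | he, h1, h2⟩
        · exact absurd he h1
        · exact ⟨he, h2⟩
      · rintro ⟨he, h2⟩
        exact ⟨Or.inr he, mem_del_ne Fbar T v e he, h2⟩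
    rw [hsd2, Finset.prod_insert hevB]
    have he1 : ∏ e ∈ B, μ' e = ∏ e ∈ B, μ e :=
      Finset.prod_congr rfl fun e he => by
        simp only [hμ']
        exact if_neg (mem_del_ne Fbar T v e (hB he))
    have he2 : ∏ e ∈ edgeFin (bbSideDel Fbar T v) \ B, (1 - μ' e)
        = ∏ e ∈ edgeFin (bbSideDel Fbar T v) \ B, (1 - μ e) :=
      Finset.prod_congr rfl fun e he => by
        simp only [hμ']
        rw [if_neg (mem_del_ne Fbar T v e (Finset.mem_sdiff.mp he).1)]
    have he3 : μ' (s(((v : V), false), ((v : V), true))) = p := by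
      simp [hμ']
    rw [he1, he2, he3]
    ring
  have hR : percProb (bbSide Fbar T) μ' (fun K => ConnIn K x y)
      = ∑ B ∈ (edgeFin (bbSideDel Fbar T v)).powerset,
          ((if ConnIn (insert (s(((v : V), false), ((v : V), true))) B) x y then p else 0)
            + (if ConnIn B x y then 1 - p else 0)) * percWeight (bbSideDel Fbar T v) μ B := by
    rw [percProb, hEH, Finset.sum_powerset_insert hnot]
    have h1 : ∀ B ∈ (edgeFin (bbSideDel Fbar T v)).powerset,
        (if ConnIn B x y then percWeight (bbSide Fbar T) μ' B else 0)
        = (if ConnIn B x y then (1 - p) * percWeight (bbSideDel Fbar T v) μ B else 0) := by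
      intro B hB
      rw [hw1 B (Finset.mem_powerset.mp hB)]
    have h2 : ∀ B ∈ (edgeFin (bbSideDel Fbar T v)).powerset,
        (if ConnIn (insert (s(((v : V), false), ((v : V), true))) B) x y
          then percWeight (bbSide Fbar T) μ' (insert (s(((v : V), false), ((v : V), true))) B)
          else 0)
        = (if ConnIn (insert (s(((v : V), false), ((v : V), true))) B) x y
            then p * percWeight (bbSideDel Fbar T v) μ B else 0) := by
      intro B hB
      rw [hw2 B (Finset.mem_powerset.mp hB)]
    rw [Finset.sum_congr rfl h1, Finset.sum_congr rfl h2, ← Finset.sum_add_distrib]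
    refine Finset.sum_congr rfl fun B hB => ?_
    by_cases hC1 : ConnIn (insert (s(((v : V), false), ((v : V), true))) B) x y <;>
      by_cases hC0 : ConnIn B x y <;>
      simp [hC1, hC0] <;> ring
  rw [hL, hR]
end
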